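/- arXiv:math/9508208 — 5 statements merged into one kernel-verified Lean document; each statement's English description precedes it below -/
import Mathlib

section
/- There do not exist four distinct perfect squares of integers forming an arithmetic progression. -/
private lemma zmod3_aux {a b m : ℤ} (h : a ^ 2 + b ^ 2 = 3 * m ^ 2) : (3:ℤ) ∣ a ∧ (3:ℤ) ∣ b := by
  have h3 : ((a : ZMod 3)) ^ 2 + ((b : ZMod 3)) ^ 2 = 0 := by
    have := congrArg (fun t : ℤ => (t : ZMod 3)) h
    push_cast at this
    rw [this, show ((3:ZMod 3)) = 0 from rfl, zero_mul]
  have key : ∀ u v : ZMod 3, u ^ 2 + v ^ 2 = 0 → u = 0 ∧ v = 0 := by decide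
  obtain ⟨h1, h2⟩ := key _ _ h3
  exact ⟨(ZMod.intCast_zmod_eq_zero_iff_dvd a 3).mp h1, (ZMod.intCast_zmod_eq_zero_iff_dvd b 3).mp h2⟩

private lemma quartic_aux (N : ℕ) : ∀ x y z : ℤ, y.natAbs ≤ N → Odd x → Even y →
    IsCoprime x y → x ^ 4 - x ^ 2 * y ^ 2 + y ^ 4 = z ^ 2 → y = 0 := by
  induction N with
  | zero =>
      intro x y z hyN _ _ _ _
      omega
  | succ nbd IHn =>
  intro x y z hyN hx hy hxy h
  by_contra hy0
  have hx0 : x ≠ 0 := by rintro rfl; obtain ⟨k, hk⟩ := hx; omega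
  have hxyne : x * y ≠ 0 := mul_ne_zero hx0 hy0
  have hz0 : z ≠ 0 := by
    rintro rfl
    have h1 : (x ^ 2 - y ^ 2) ^ 2 + (x * y) ^ 2 = 0 := by linear_combination h
    have h2 : (0:ℤ) < (x * y) ^ 2 := lt_of_le_of_ne (sq_nonneg _) (Ne.symm (pow_ne_zero 2 hxyne))
    nlinarith [sq_nonneg (x ^ 2 - y ^ 2)]
  have htrip : PythagoreanTriple (x ^ 2 - y ^ 2) (x * y) |z| := by
    show (x ^ 2 - y ^ 2) * (x ^ 2 - y ^ 2) + (x * y) * (x * y) = |z| * |z|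
    rw [abs_mul_abs_self]
    linear_combination h
  have hcop1 : IsCoprime (x ^ 2 - y ^ 2) (x * y) := by
    have c1 : IsCoprime (x ^ 2 - y ^ 2) x := by
      have h1 : IsCoprime (y ^ 2) x := hxy.symm.pow_left
      have h2 := (h1.neg_left).add_mul_left_left x
      rwa [show -(y ^ 2) + x * x = x ^ 2 - y ^ 2 by ring] at h2
    have c2 : IsCoprime (x ^ 2 - y ^ 2) y := by
      have h1 : IsCoprime (x ^ 2) y := hxy.pow_left
      have h2 := h1.add_mul_left_left (-y)
      rwa [show x ^ 2 + y * (-y) = x ^ 2 - y ^ 2 by ring] at h2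
    exact c1.mul_right c2
  have hgcd1 : Int.gcd (x ^ 2 - y ^ 2) (x * y) = 1 := Int.isCoprime_iff_gcd_eq_one.mp hcop1
  have hodd1 : (x ^ 2 - y ^ 2) % 2 = 1 := by
    obtain ⟨k, hk⟩ := hx
    obtain ⟨l, hl⟩ := hy
    have : Odd (x ^ 2 - y ^ 2) := ⟨2*k^2 + 2*k - 2*l^2, by rw [hk, hl]; ring⟩
    exact Int.odd_iff.mp this
  obtain ⟨m, n, hA, hB, _hC, hmn, _hpar, _hm0⟩ :=
    htrip.coprime_classification' hgcd1 hodd1 (abs_pos.mpr hz0)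
  obtain ⟨y₁, hy₁⟩ := hy
  have hy₁' : y = 2 * y₁ := by omega
  have hy₁0 : y₁ ≠ 0 := by omega
  have hkey : x * y₁ = m * n := by
    have h2 : (2:ℤ) * (x * y₁) = 2 * (m * n) := by rw [hy₁'] at hB; linear_combination hB
    exact mul_left_cancel₀ two_ne_zero h2
  have hxdvd : x ∣ m * n := ⟨y₁, hkey.symm⟩
  obtain ⟨A, X, hAm, hXn, hxAX⟩ := exists_dvd_and_dvd_of_dvd_mul hxdvd
  obtain ⟨m₁, hm₁⟩ := hAm
  obtain ⟨n₁, hn₁⟩ := hXn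
  have hA0 : A ≠ 0 := fun hh => hx0 (by rw [hxAX, hh, zero_mul])
  have hX0 : X ≠ 0 := fun hh => hx0 (by rw [hxAX, hh, mul_zero])
  have hy₁eq : y₁ = m₁ * n₁ := by
    refine mul_left_cancel₀ (mul_ne_zero hA0 hX0) ?_
    rw [hm₁, hn₁, hxAX] at hkey
    linear_combination hkey
  have hm₁0 : m₁ ≠ 0 := by rintro rfl; rw [zero_mul] at hy₁eq; exact hy₁0 hy₁eq
  have hn₁0 : n₁ ≠ 0 := by rintro rfl; rw [mul_zero] at hy₁eq; exact hy₁0 hy₁eq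
  have copxy₁ : IsCoprime x y₁ := hxy.of_isCoprime_of_dvd_right ⟨2, by rw [hy₁']; ring⟩
  have copXm₁ : IsCoprime X m₁ :=
    (copxy₁.of_isCoprime_of_dvd_left ⟨A, by rw [hxAX]; ring⟩).of_isCoprime_of_dvd_right
      ⟨n₁, by rw [hy₁eq]⟩
  have copAn₁ : IsCoprime A n₁ :=
    (copxy₁.of_isCoprime_of_dvd_left ⟨X, hxAX⟩).of_isCoprime_of_dvd_right
      ⟨m₁, by rw [hy₁eq]; ring⟩
  have heq : X ^ 2 * (A ^ 2 + n₁ ^ 2) = m₁ ^ 2 * (A ^ 2 + 4 * n₁ ^ 2) := by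
    rw [hxAX, hy₁', hy₁eq, hm₁, hn₁] at hA
    linear_combination hA
  have hdm : m₁ ^ 2 ∣ A ^ 2 + n₁ ^ 2 := by
    have h1 : m₁ ^ 2 ∣ X ^ 2 * (A ^ 2 + n₁ ^ 2) := ⟨A ^ 2 + 4 * n₁ ^ 2, heq⟩
    exact (copXm₁.symm.pow).dvd_of_dvd_mul_left h1
  obtain ⟨w, hw⟩ := hdm
  have hw2 : X ^ 2 * w = A ^ 2 + 4 * n₁ ^ 2 := by
    refine mul_left_cancel₀ (pow_ne_zero 2 hm₁0) ?_
    rw [← heq, hw]; ring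
  have hwn : w ∣ 3 := by
    have hd3 : w ∣ 3 * n₁ ^ 2 := ⟨X ^ 2 - m₁ ^ 2, by linear_combination - hw2 - hw⟩
    have copwn : IsCoprime w n₁ := by
      have c1 : IsCoprime (A ^ 2 + n₁ ^ 2) n₁ := by
        have h1 : IsCoprime (A ^ 2) n₁ := copAn₁.pow_left
        have h2 := h1.add_mul_left_left n₁
        rwa [show A ^ 2 + n₁ * n₁ = A ^ 2 + n₁ ^ 2 by ring] at h2
      exact c1.of_isCoprime_of_dvd_left ⟨m₁ ^ 2, by rw [hw]; ring⟩
    exact (copwn.pow_right).dvd_of_dvd_mul_right hd3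
  have hwpos : 0 < w := by
    have hA2 : (0:ℤ) < A ^ 2 := lt_of_le_of_ne (sq_nonneg _) (Ne.symm (pow_ne_zero 2 hA0))
    nlinarith [sq_nonneg n₁, sq_nonneg m₁]
  have hw13 : w = 1 ∨ w = 3 := by
    have hle : w ≤ 3 := Int.le_of_dvd (by norm_num) hwn
    have hne2 : w ≠ 2 := by rintro rfl; obtain ⟨t, ht⟩ := hwn; omega
    omega
  rcases hw13 with rfl | rfl
  · -- w = 1 : descent
    have hS1 : A ^ 2 + n₁ ^ 2 = m₁ ^ 2 := by linear_combination hw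
    have hS2 : A ^ 2 + 4 * n₁ ^ 2 = X ^ 2 := by linear_combination -hw2
    have hAodd : Odd A := by
      rcases Int.even_or_odd A with hA2 | hA2
      · exfalso
        have : Even x := by rw [hxAX]; exact hA2.mul_right X
        exact (Int.not_odd_iff_even.mpr this) hx
      · exact hA2
    have copA2n₁ : IsCoprime A (2 * n₁) := by
      obtain ⟨k, hk⟩ := hAodd
      have c2 : IsCoprime A 2 := ⟨1, -k, by rw [hk]; ring⟩
      exact c2.mul_right copAn₁
    have htrip2 : PythagoreanTriple A (2 * n₁) |X| := by
      show A * A + (2 * n₁) * (2 * n₁) = |X| * |X|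
      rw [abs_mul_abs_self]
      linear_combination hS2
    obtain ⟨M, Nv, hA', hB', _hC', hmn', hpar', _hM0'⟩ :=
      htrip2.coprime_classification' (Int.isCoprime_iff_gcd_eq_one.mp copA2n₁)
        (Int.odd_iff.mp hAodd) (abs_pos.mpr hX0)
    have hn₁MN : n₁ = M * Nv := by
      refine mul_left_cancel₀ (two_ne_zero (α := ℤ)) ?_
      linear_combination hB'
    have hnewq : M ^ 4 - M ^ 2 * Nv ^ 2 + Nv ^ 4 = m₁ ^ 2 := by
      rw [hA', hn₁MN] at hS1
      linear_combination hS1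
    have hM0 : M ≠ 0 := by rintro rfl; rw [zero_mul] at hn₁MN; exact hn₁0 hn₁MN
    have hN0 : Nv ≠ 0 := by rintro rfl; rw [mul_zero] at hn₁MN; exact hn₁0 hn₁MN
    have copMN : IsCoprime M Nv := Int.isCoprime_iff_gcd_eq_one.mpr hmn'
    have hyabs : y.natAbs = 2 * (m₁.natAbs * (M.natAbs * Nv.natAbs)) := by
      rw [hy₁', hy₁eq, hn₁MN, Int.natAbs_mul, Int.natAbs_mul, Int.natAbs_mul]
      rfl
    have hm₁abs : 1 ≤ m₁.natAbs := Int.natAbs_pos.mpr hm₁0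
    have hMabs : 1 ≤ M.natAbs := Int.natAbs_pos.mpr hM0
    have hNabs : 1 ≤ Nv.natAbs := Int.natAbs_pos.mpr hN0
    have hboundM : M.natAbs ≤ nbd := by
      obtain ⟨t, ht1, hMt, h2t⟩ : ∃ t, 1 ≤ t ∧ M.natAbs ≤ t ∧ y.natAbs = 2 * t := by
        refine ⟨m₁.natAbs * (M.natAbs * Nv.natAbs), ?_, ?_, hyabs⟩
        · exact Nat.one_le_iff_ne_zero.mpr (by positivity)
        · calc M.natAbs = 1 * (M.natAbs * 1) := by ring
            _ ≤ m₁.natAbs * (M.natAbs * Nv.natAbs) :=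
              Nat.mul_le_mul hm₁abs (Nat.mul_le_mul le_rfl hNabs)
      omega
    have hboundN : Nv.natAbs ≤ nbd := by
      obtain ⟨t, ht1, hMt, h2t⟩ : ∃ t, 1 ≤ t ∧ Nv.natAbs ≤ t ∧ y.natAbs = 2 * t := by
        refine ⟨m₁.natAbs * (M.natAbs * Nv.natAbs), ?_, ?_, hyabs⟩
        · exact Nat.one_le_iff_ne_zero.mpr (by positivity)
        · calc Nv.natAbs = 1 * (1 * Nv.natAbs) := by ring
            _ ≤ m₁.natAbs * (M.natAbs * Nv.natAbs) :=
              Nat.mul_le_mul hm₁abs (Nat.mul_le_mul hMabs le_rfl)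
      omega
    rcases hpar' with ⟨hMe, hNo⟩ | ⟨hMo, hNe⟩
    · -- M even, Nv odd : new pair (Nv, M)
      have : M = 0 := by
        refine IHn Nv M m₁ hboundM (Int.odd_iff.mpr hNo) (Int.even_iff.mpr hMe) copMN.symm ?_
        linear_combination hnewq
      exact hM0 this
    · -- M odd, Nv even : new pair (M, Nv)
      have : Nv = 0 := by
        refine IHn M Nv m₁ hboundN (Int.odd_iff.mpr hMo) (Int.even_iff.mpr hNe) copMN ?_
        linear_combination hnewq
      exact hN0 this
  · -- w = 3 : impossible mod 3
    obtain ⟨h3A, h3n⟩ := zmod3_aux (show A ^ 2 + n₁ ^ 2 = 3 * m₁ ^ 2 by linear_combination hw)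
    have hu : IsUnit (3:ℤ) := copAn₁.isUnit_of_dvd' h3A h3n
    rw [Int.isUnit_iff] at hu
    omega


private lemma main_lemma (a b c d : ℤ) (h1 : a ^ 2 + c ^ 2 = 2 * b ^ 2)
    (h2 : b ^ 2 + d ^ 2 = 2 * c ^ 2)
    (hco : ∀ e : ℤ, e ∣ a → e ∣ b → e ∣ c → e ∣ d → IsUnit e) : b ^ 2 = c ^ 2 := by
  by_contra hbc
  have hunit2 : ¬ IsUnit (2:ℤ) := by rw [Int.isUnit_iff]; omega
  -- a, c odd
  have hodd_ac : Odd a ∧ Odd c := by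
    rcases Int.even_or_odd a with ha | ha
    · exfalso
      obtain ⟨a', rfl⟩ := ha
      rcases Int.even_or_odd c with hc | hc
      · obtain ⟨c', rfl⟩ := hc
        have hb : b ^ 2 = 2 * a' ^ 2 + 2 * c' ^ 2 :=
          mul_left_cancel₀ two_ne_zero (by linear_combination -h1)
        have hbev : Even (b ^ 2) := ⟨a' ^ 2 + c' ^ 2, by linarith⟩
        have hbe : Even b := (Int.even_pow.mp hbev).1
        obtain ⟨b', rfl⟩ := hbe
        have hd : d ^ 2 = 8 * c' ^ 2 - 4 * b' ^ 2 := by linear_combination h2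
        have hdev : Even (d ^ 2) := ⟨4 * c' ^ 2 - 2 * b' ^ 2, by linarith⟩
        have hde : Even d := (Int.even_pow.mp hdev).1
        obtain ⟨d', rfl⟩ := hde
        exact hunit2 (hco 2 ⟨a', by ring⟩ ⟨b', by ring⟩ ⟨c', by ring⟩ ⟨d', by ring⟩)
      · obtain ⟨k, rfl⟩ := hc
        have hoddsum : Odd ((a' + a') ^ 2 + (2 * k + 1) ^ 2) :=
          ⟨2 * a' ^ 2 + 2 * k ^ 2 + 2 * k, by ring⟩
        rw [h1] at hoddsum
        exact (Int.not_odd_iff_even.mpr ⟨b ^ 2, by ring⟩) hoddsum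
    · rcases Int.even_or_odd c with hc | hc
      · exfalso
        obtain ⟨c', rfl⟩ := hc
        obtain ⟨k, rfl⟩ := ha
        have hoddsum : Odd ((2 * k + 1) ^ 2 + (c' + c') ^ 2) :=
          ⟨2 * k ^ 2 + 2 * k + 2 * c' ^ 2, by ring⟩
        rw [h1] at hoddsum
        exact (Int.not_odd_iff_even.mpr ⟨b ^ 2, by ring⟩) hoddsum
      · exact ⟨ha, hc⟩
  obtain ⟨hodda, hoddc⟩ := hodd_ac
  obtain ⟨α, hα⟩ := hodda
  obtain ⟨γ, hγ⟩ := hoddc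
  have hoddb : Odd b := by
    rcases Int.even_or_odd b with hbe | hbo
    · exfalso
      obtain ⟨b', rfl⟩ := hbe
      have hcontr : (1:ℤ) = 4 * ((b' ^ 2 + b' ^ 2) - (α ^ 2 + α + γ ^ 2 + γ)) - 1 := by
        rw [hα, hγ] at h1
        linear_combination h1
      obtain ⟨t, ht⟩ : ∃ t : ℤ, (b' ^ 2 + b' ^ 2) - (α ^ 2 + α + γ ^ 2 + γ) = t := ⟨_, rfl⟩
      rw [ht] at hcontr
      omega
    · exact hbo
  obtain ⟨β, hβ⟩ := hoddb
  have hoddd : Odd d := by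
    rcases Int.even_or_odd d with hde | hdo
    · exfalso
      obtain ⟨d', rfl⟩ := hde
      have hcontr : (1:ℤ) = 4 * (β ^ 2 + β + d' ^ 2 - 2 * γ ^ 2 - 2 * γ) := by
        rw [hβ, hγ] at h2
        linear_combination -h2
      obtain ⟨t, ht⟩ : ∃ t : ℤ, β ^ 2 + β + d' ^ 2 - 2 * γ ^ 2 - 2 * γ = t := ⟨_, rfl⟩
      rw [ht] at hcontr
      omega
    · exact hdo
  obtain ⟨δ, hδ⟩ := hoddd
  -- half-sum variables
  set p : ℤ := α + γ + 1 with hpdef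
  set q : ℤ := γ - α with hqdef
  set r : ℤ := β + δ + 1 with hrdef
  set s : ℤ := δ - β with hsdef
  have hp : a + c = 2 * p := by rw [hα, hγ, hpdef]; ring
  have hq : c - a = 2 * q := by rw [hα, hγ, hqdef]; ring
  have hr : d + b = 2 * r := by rw [hβ, hδ, hrdef]; ring
  have hs : d - b = 2 * s := by rw [hβ, hδ, hsdef]; ring
  have hpq : p ^ 2 + q ^ 2 = b ^ 2 := by
    have h4 : 4 * (p ^ 2 + q ^ 2) = 4 * b ^ 2 := by
      linear_combination (-(a + c + 2 * p)) * hp + (-(c - a + 2 * q)) * hq + 2 * h1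
    linarith
  have hrs : r ^ 2 + s ^ 2 = c ^ 2 := by
    have h4 : 4 * (r ^ 2 + s ^ 2) = 4 * c ^ 2 := by
      linear_combination (-(d + b + 2 * r)) * hr + (-(d - b + 2 * s)) * hs + 2 * h2
    linarith
  have hcpq : c = p + q := by omega
  have hbrs : b = r - s := by omega
  have hk : p * q = r * s := by
    have h8 : 2 * (p * q) = 2 * (r * s) := by
      linear_combination (-(c + p + q)) * hcpq - hpq - hrs + (-(b + r - s)) * hbrs
    exact mul_left_cancel₀ two_ne_zero h8
  have h2pq : 2 * (p * q) = c ^ 2 - b ^ 2 := by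
    linear_combination (-(c + p + q)) * hcpq - hpq
  have hpq0 : p * q ≠ 0 := by
    intro h0
    apply hbc
    rw [h0] at h2pq
    linarith
  have hrs0 : r * s ≠ 0 := by rw [← hk]; exact hpq0
  have hp0 : p ≠ 0 := fun h => hpq0 (by rw [h, zero_mul])
  have hq0 : q ≠ 0 := fun h => hpq0 (by rw [h, mul_zero])
  have hr0 : r ≠ 0 := fun h => hrs0 (by rw [h, zero_mul])
  have hs0 : s ≠ 0 := fun h => hrs0 (by rw [h, mul_zero])
  -- coprimality
  have copq : IsCoprime p q := by
    have hgp : ((Int.gcd p q : ℕ) : ℤ) ∣ p := Int.gcd_dvd_left _ _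
    have hgq : ((Int.gcd p q : ℕ) : ℤ) ∣ q := Int.gcd_dvd_right _ _
    have hga : ((Int.gcd p q : ℕ) : ℤ) ∣ a := by
      have haa : a = p - q := by omega
      rw [haa]; exact dvd_sub hgp hgq
    have hgc : ((Int.gcd p q : ℕ) : ℤ) ∣ c := by rw [hcpq]; exact dvd_add hgp hgq
    have hgb : ((Int.gcd p q : ℕ) : ℤ) ∣ b := by
      refine (Int.pow_dvd_pow_iff (two_ne_zero)).mp ?_
      rw [← hpq]
      exact dvd_add (pow_dvd_pow_of_dvd hgp 2) (pow_dvd_pow_of_dvd hgq 2)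
    have hgd : ((Int.gcd p q : ℕ) : ℤ) ∣ d := by
      refine (Int.pow_dvd_pow_iff (two_ne_zero)).mp ?_
      have hdd : d ^ 2 = 2 * c ^ 2 - b ^ 2 := by linarith
      rw [hdd]
      exact dvd_sub ((pow_dvd_pow_of_dvd hgc 2).mul_left 2) (pow_dvd_pow_of_dvd hgb 2)
    have hu := hco _ hga hgb hgc hgd
    rw [Int.isUnit_iff] at hu
    refine Int.isCoprime_iff_gcd_eq_one.mpr ?_
    rcases hu with h | h
    · exact_mod_cast h
    · exfalso
      have : (0:ℤ) ≤ ((Int.gcd p q : ℕ) : ℤ) := Int.natCast_nonneg _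
      omega
  have coprs : IsCoprime r s := by
    have hgp : ((Int.gcd r s : ℕ) : ℤ) ∣ r := Int.gcd_dvd_left _ _
    have hgq : ((Int.gcd r s : ℕ) : ℤ) ∣ s := Int.gcd_dvd_right _ _
    have hgd : ((Int.gcd r s : ℕ) : ℤ) ∣ d := by
      have hdd : d = r + s := by omega
      rw [hdd]; exact dvd_add hgp hgq
    have hgb : ((Int.gcd r s : ℕ) : ℤ) ∣ b := by rw [hbrs]; exact dvd_sub hgp hgq
    have hgc : ((Int.gcd r s : ℕ) : ℤ) ∣ c := by
      refine (Int.pow_dvd_pow_iff (two_ne_zero)).mp ?_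
      rw [← hrs]
      exact dvd_add (pow_dvd_pow_of_dvd hgp 2) (pow_dvd_pow_of_dvd hgq 2)
    have hga : ((Int.gcd r s : ℕ) : ℤ) ∣ a := by
      refine (Int.pow_dvd_pow_iff (two_ne_zero)).mp ?_
      have haa : a ^ 2 = 2 * b ^ 2 - c ^ 2 := by linarith
      rw [haa]
      exact dvd_sub ((pow_dvd_pow_of_dvd hgb 2).mul_left 2) (pow_dvd_pow_of_dvd hgc 2)
    have hu := hco _ hga hgb hgc hgd
    rw [Int.isUnit_iff] at hu
    refine Int.isCoprime_iff_gcd_eq_one.mpr ?_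
    rcases hu with h | h
    · exact_mod_cast h
    · exfalso
      have : (0:ℤ) ≤ ((Int.gcd r s : ℕ) : ℤ) := Int.natCast_nonneg _
      omega
  -- splitting p*q = r*s
  have hdvd : p ∣ r * s := ⟨q, hk.symm⟩
  obtain ⟨P, x, hPr, hxs, hpPx⟩ := exists_dvd_and_dvd_of_dvd_mul hdvd
  obtain ⟨yv, hyv⟩ := hPr
  obtain ⟨S, hS⟩ := hxs
  have hP0 : P ≠ 0 := fun h => hp0 (by rw [hpPx, h, zero_mul])
  have hx0 : x ≠ 0 := fun h => hp0 (by rw [hpPx, h, mul_zero])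
  have hq' : q = yv * S := by
    refine mul_left_cancel₀ (mul_ne_zero hP0 hx0) ?_
    rw [hpPx, hyv, hS] at hk
    linear_combination hk
  have hyv0 : yv ≠ 0 := fun h => hr0 (by rw [hyv, h, mul_zero])
  have hS0 : S ≠ 0 := fun h => hq0 (by rw [hq', h, mul_zero])
  have hstar : (P ^ 2 - S ^ 2) * (yv ^ 2 - x ^ 2) = 2 * P * S * x * yv := by
    rw [hyv, hS, hcpq, hpPx, hq'] at hrs
    linear_combination hrs
  have copPS : IsCoprime P S :=
    (copq.of_isCoprime_of_dvd_left ⟨x, hpPx⟩).of_isCoprime_of_dvd_right ⟨yv, by rw [hq']; ring⟩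
  have copxy : IsCoprime x yv :=
    (copq.of_isCoprime_of_dvd_left ⟨P, by rw [hpPx]; ring⟩).of_isCoprime_of_dvd_right ⟨S, hq'⟩
  -- p*q is even
  have hpq_even : Even (p * q) := by
    rcases Int.even_or_odd p with hpe | hpe
    · exact hpe.mul_right q
    · rcases Int.even_or_odd q with hqe | hqe
      · exact hqe.mul_left p
      · exfalso
        obtain ⟨i, hi⟩ := hpe
        obtain ⟨j, hj⟩ := hqe
        have hcontr : (1:ℤ) = 4 * (β ^ 2 + β - i ^ 2 - i - j ^ 2 - j) := by
          rw [hi, hj, hβ] at hpq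
          linear_combination hpq
        obtain ⟨t, ht⟩ : ∃ t : ℤ, β ^ 2 + β - i ^ 2 - i - j ^ 2 - j = t := ⟨_, rfl⟩
        rw [ht] at hcontr
        omega
  -- case analysis on the (unique) even variable
  rcases Int.even_or_odd x with hxe | hxo
  · -- x even, yv odd
    have hyodd : Odd yv := by
      rcases Int.even_or_odd yv with hye | hye
      · exfalso
        exact hunit2 (copxy.isUnit_of_dvd' hxe.two_dvd hye.two_dvd)
      · exact hye
    have hKid : ((x ^ 2 - yv ^ 2) * S - x * yv * P) ^ 2
        = P ^ 2 * (x ^ 4 - x ^ 2 * yv ^ 2 + yv ^ 4) := by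
      linear_combination (x ^ 2 - yv ^ 2) * hstar
    have hdvP : P ∣ (x ^ 2 - yv ^ 2) * S - x * yv * P :=
      (Int.pow_dvd_pow_iff (two_ne_zero)).mp ⟨_, hKid⟩
    obtain ⟨z, hz⟩ := hdvP
    have hquart : yv ^ 4 - yv ^ 2 * x ^ 2 + x ^ 4 = z ^ 2 := by
      have h9 : P ^ 2 * (x ^ 4 - x ^ 2 * yv ^ 2 + yv ^ 4) = P ^ 2 * z ^ 2 := by
        rw [← hKid, hz]; ring
      have h10 := mul_left_cancel₀ (pow_ne_zero 2 hP0) h9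
      linear_combination h10
    exact hx0 (quartic_aux x.natAbs yv x z le_rfl hyodd hxe copxy.symm hquart)
  · rcases Int.even_or_odd yv with hye | hyo
    · -- yv even, x odd
      have hKid : ((x ^ 2 - yv ^ 2) * S - x * yv * P) ^ 2
          = P ^ 2 * (x ^ 4 - x ^ 2 * yv ^ 2 + yv ^ 4) := by
        linear_combination (x ^ 2 - yv ^ 2) * hstar
      have hdvP : P ∣ (x ^ 2 - yv ^ 2) * S - x * yv * P :=
        (Int.pow_dvd_pow_iff (two_ne_zero)).mp ⟨_, hKid⟩
      obtain ⟨z, hz⟩ := hdvP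
      have hquart : x ^ 4 - x ^ 2 * yv ^ 2 + yv ^ 4 = z ^ 2 := by
        have h9 : P ^ 2 * (x ^ 4 - x ^ 2 * yv ^ 2 + yv ^ 4) = P ^ 2 * z ^ 2 := by
          rw [← hKid, hz]; ring
        have h10 := mul_left_cancel₀ (pow_ne_zero 2 hP0) h9
        linear_combination h10
      exact hyv0 (quartic_aux yv.natAbs x yv z le_rfl hxo hye copxy hquart)
    · rcases Int.even_or_odd P with hPe | hPo
      · -- P even, S odd
        have hSodd : Odd S := by
          rcases Int.even_or_odd S with hSe | hSe
          · exfalso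
            exact hunit2 (copPS.isUnit_of_dvd' hPe.two_dvd hSe.two_dvd)
          · exact hSe
        have hKid : ((P ^ 2 - S ^ 2) * yv - P * S * x) ^ 2
            = x ^ 2 * (P ^ 4 - P ^ 2 * S ^ 2 + S ^ 4) := by
          linear_combination (P ^ 2 - S ^ 2) * hstar
        have hdvx : x ∣ (P ^ 2 - S ^ 2) * yv - P * S * x :=
          (Int.pow_dvd_pow_iff (two_ne_zero)).mp ⟨_, hKid⟩
        obtain ⟨z, hz⟩ := hdvx
        have hquart : S ^ 4 - S ^ 2 * P ^ 2 + P ^ 4 = z ^ 2 := by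
          have h9 : x ^ 2 * (P ^ 4 - P ^ 2 * S ^ 2 + S ^ 4) = x ^ 2 * z ^ 2 := by
            rw [← hKid, hz]; ring
          have h10 := mul_left_cancel₀ (pow_ne_zero 2 hx0) h9
          linear_combination h10
        exact hP0 (quartic_aux P.natAbs S P z le_rfl hSodd hPe copPS.symm hquart)
      · rcases Int.even_or_odd S with hSe | hSo
        · -- S even, P odd
          have hKid : ((P ^ 2 - S ^ 2) * yv - P * S * x) ^ 2
              = x ^ 2 * (P ^ 4 - P ^ 2 * S ^ 2 + S ^ 4) := by
            linear_combination (P ^ 2 - S ^ 2) * hstar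
          have hdvx : x ∣ (P ^ 2 - S ^ 2) * yv - P * S * x :=
            (Int.pow_dvd_pow_iff (two_ne_zero)).mp ⟨_, hKid⟩
          obtain ⟨z, hz⟩ := hdvx
          have hquart : P ^ 4 - P ^ 2 * S ^ 2 + S ^ 4 = z ^ 2 := by
            have h9 : x ^ 2 * (P ^ 4 - P ^ 2 * S ^ 2 + S ^ 4) = x ^ 2 * z ^ 2 := by
              rw [← hKid, hz]; ring
            have h10 := mul_left_cancel₀ (pow_ne_zero 2 hx0) h9
            linear_combination h10
          exact hS0 (quartic_aux S.natAbs P S z le_rfl hPo hSe copPS hquart)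
        · -- all odd : contradiction with p*q even
          exfalso
          have hpodd : Odd p := by rw [hpPx]; exact hPo.mul hxo
          have hqodd : Odd q := by rw [hq']; exact hyo.mul hSo
          exact (Int.not_odd_iff_even.mpr hpq_even) (hpodd.mul hqodd)

theorem stmt_5 :
    ¬ ∃ a b c d : ℤ,
      (b ^ 2 - a ^ 2 = c ^ 2 - b ^ 2 ∧ c ^ 2 - b ^ 2 = d ^ 2 - c ^ 2) ∧
      a ^ 2 ≠ b ^ 2 ∧ a ^ 2 ≠ c ^ 2 ∧ a ^ 2 ≠ d ^ 2 ∧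
      b ^ 2 ≠ c ^ 2 ∧ b ^ 2 ≠ d ^ 2 ∧ c ^ 2 ≠ d ^ 2 := by
  rintro ⟨a, b, c, d, ⟨h1, h2⟩, -, -, -, hbc, -, -⟩
  have e1 : a ^ 2 + c ^ 2 = 2 * b ^ 2 := by linarith
  have e2 : b ^ 2 + d ^ 2 = 2 * c ^ 2 := by linarith
  set g : ℕ := Nat.gcd (Int.gcd a b) (Int.gcd c d) with hgdef
  have hg0 : g ≠ 0 := by
    intro h0
    have h1' := Nat.eq_zero_of_gcd_eq_zero_left h0
    have h2' := Nat.eq_zero_of_gcd_eq_zero_right h0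
    obtain ⟨-, hb0⟩ := Int.gcd_eq_zero_iff.mp h1'
    obtain ⟨hc0, -⟩ := Int.gcd_eq_zero_iff.mp h2'
    exact hbc (by rw [hb0, hc0])
  have hga : (g:ℤ) ∣ a :=
    (Int.natCast_dvd_natCast.mpr (Nat.gcd_dvd_left _ _)).trans (Int.gcd_dvd_left _ _)
  have hgb : (g:ℤ) ∣ b :=
    (Int.natCast_dvd_natCast.mpr (Nat.gcd_dvd_left _ _)).trans (Int.gcd_dvd_right _ _)
  have hgc : (g:ℤ) ∣ c :=
    (Int.natCast_dvd_natCast.mpr (Nat.gcd_dvd_right _ _)).trans (Int.gcd_dvd_left _ _)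
  have hgd : (g:ℤ) ∣ d :=
    (Int.natCast_dvd_natCast.mpr (Nat.gcd_dvd_right _ _)).trans (Int.gcd_dvd_right _ _)
  obtain ⟨a₁, ha₁⟩ := hga
  obtain ⟨b₁, hb₁⟩ := hgb
  obtain ⟨c₁, hc₁⟩ := hgc
  obtain ⟨d₁, hd₁⟩ := hgd
  have hgz : ((g:ℤ)) ^ 2 ≠ 0 := pow_ne_zero 2 (by exact_mod_cast hg0)
  have e1' : a₁ ^ 2 + c₁ ^ 2 = 2 * b₁ ^ 2 := by
    refine mul_left_cancel₀ hgz ?_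
    rw [ha₁, hb₁, hc₁] at e1
    linear_combination e1
  have e2' : b₁ ^ 2 + d₁ ^ 2 = 2 * c₁ ^ 2 := by
    refine mul_left_cancel₀ hgz ?_
    rw [hb₁, hc₁, hd₁] at e2
    linear_combination e2
  have hbc' : b₁ ^ 2 ≠ c₁ ^ 2 := by
    intro h
    apply hbc
    rw [hb₁, hc₁]
    linear_combination ((g:ℤ)) ^ 2 * h
  have hco : ∀ e : ℤ, e ∣ a₁ → e ∣ b₁ → e ∣ c₁ → e ∣ d₁ → IsUnit e := by
    intro e hea heb hec hed
    have h1' : (g:ℤ) * e ∣ a := by rw [ha₁]; exact mul_dvd_mul_left _ hea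
    have h2' : (g:ℤ) * e ∣ b := by rw [hb₁]; exact mul_dvd_mul_left _ heb
    have h3' : (g:ℤ) * e ∣ c := by rw [hc₁]; exact mul_dvd_mul_left _ hec
    have h4' : (g:ℤ) * e ∣ d := by rw [hd₁]; exact mul_dvd_mul_left _ hed
    have hd1 : (g:ℤ) * e ∣ ((Int.gcd a b : ℕ) : ℤ) := Int.dvd_coe_gcd h1' h2'
    have hd2 : (g:ℤ) * e ∣ ((Int.gcd c d : ℕ) : ℤ) := Int.dvd_coe_gcd h3' h4'
    have hd3 : (g:ℤ) * e ∣ (g : ℤ) := by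
      have := Int.dvd_coe_gcd hd1 hd2
      rwa [Int.gcd_natCast_natCast] at this
    obtain ⟨t, ht⟩ := hd3
    have het : e * t = 1 := by
      refine mul_left_cancel₀ (show ((g:ℤ)) ≠ 0 by exact_mod_cast hg0) ?_
      linear_combination -ht
    exact IsUnit.of_mul_eq_one t het
  exact hbc' (main_lemma a₁ b₁ c₁ d₁ e1' e2' hco)
end

section
/- If a and b are positive integers such that 2a^4 + 2b^4 is a perfect square and 2a^4 - 2b^4 is a perfect square, then a = b. -/
/-! Multiplying `x ^ 2 + y ^ 2 = 4 a ^ 4` by `x ^ 2 - y ^ 2 = 4 b ^ 4` gives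
`(2 a b) ^ 4 + y ^ 4 = (x ^ 2) ^ 2`, so by Fermat's theorem on `X ^ 4 + Y ^ 4 = Z ^ 2`
the square `2 a ^ 4 - 2 b ^ 4 = y ^ 2` vanishes. -/

lemma pow_four_add_pow_four_eq_sq_of_add_sub_eq_sq {R : Type*} [CommRing R] {a b x y : R}
    (hx : 2 * a ^ 4 + 2 * b ^ 4 = x ^ 2) (hy : 2 * a ^ 4 - 2 * b ^ 4 = y ^ 2) :
    (2 * a * b) ^ 4 + y ^ 4 = (x ^ 2) ^ 2 := by
  linear_combination (x ^ 2 + 2 * a ^ 4 + 2 * b ^ 4) * hx - (y ^ 2 + 2 * a ^ 4 - 2 * b ^ 4) * hy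

theorem stmt_6 (a b : ℤ) (ha : 0 < a) (hb : 0 < b)
    (h1 : ∃ x : ℤ, 2 * a ^ 4 + 2 * b ^ 4 = x ^ 2)
    (h2 : ∃ y : ℤ, 2 * a ^ 4 - 2 * b ^ 4 = y ^ 2) :
    a = b := by
  obtain ⟨x, hx⟩ := h1
  obtain ⟨y, hy⟩ := h2
  have hy0 : y = 0 := by
    by_contra hy0
    have hab : 2 * a * b ≠ 0 := by positivity
    exact not_fermat_42 hab hy0 (pow_four_add_pow_four_eq_sq_of_add_sub_eq_sq hx hy)
  have h4 : a ^ 4 = b ^ 4 := by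
    subst hy0
    linarith
  exact (pow_left_inj₀ ha.le hb.le four_ne_zero).mp h4
end

section
/- Three distinct fourth powers of positive integers cannot form an arithmetic progression: if a, b, c are positive integers with a^4 + c^4 = 2b^4, then a = b = c. -/
private lemma fourth_of_coprime {a b c : ℤ} (h : IsCoprime a b) (heq : a * b = c ^ 4)
    (ha : 0 < a) : ∃ d : ℤ, a = d ^ 4 := by
  obtain ⟨d, hd⟩ := exists_associated_pow_of_mul_eq_pow' h heq
  rcases Int.associated_iff.mp hd with h1 | h1
  · exact ⟨d, h1.symm⟩
  · exfalso
    have h2 : (0:ℤ) ≤ d ^ 4 := by positivity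
    nlinarith

private lemma zmod4_key : ∀ j k z : ZMod 4, (2*j+1)^4 + z^2 ≠ (k+k)^4 := by decide

set_option maxHeartbeats 1000000 in
private lemma no_sol : ∀ n : ℕ, ∀ x y z : ℤ, x.natAbs = n → 0 < x → 0 < y → 0 < z →
    y ^ 4 + z ^ 2 ≠ x ^ 4 := by
  intro n
  induction n using Nat.strong_induction_on with
  | _ n ih =>
  intro x y z hn hx hy hz heq
  rcases eq_or_ne (Int.gcd x y) 1 with hg | hg
  · -- coprime case
    have hco : IsCoprime x y := Int.isCoprime_iff_gcd_eq_one.mpr hg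
    -- x is odd
    have hxodd : x % 2 = 1 := by
      rcases Int.even_or_odd x with hex | hox
      · exfalso
        have hoy : Odd y := by
          rcases Int.even_or_odd y with hey | hoy
          · exfalso
            obtain ⟨k, hk⟩ := hex
            obtain ⟨j, hj⟩ := hey
            have : IsUnit (2:ℤ) := hco.isUnit_of_dvd' ⟨k, by omega⟩ ⟨j, by omega⟩
            rw [Int.isUnit_iff] at this; omega
          · exact hoy
        obtain ⟨k, hk⟩ := hex
        obtain ⟨j, hj⟩ := hoy
        have hc := congrArg (fun t : ℤ => (t : ZMod 4)) heq
        push_cast [hk, hj] at hc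
        exact zmod4_key _ _ _ hc
      · exact Int.odd_iff.mp hox
    rcases Int.even_or_odd y with hey | hoy
    · -- y even, z odd
      have hzodd : z % 2 = 1 := by
        rcases Int.even_or_odd z with hez | hoz
        · exfalso
          have h1 : Even (y ^ 4 + z ^ 2) := (hey.pow_of_ne_zero (by norm_num)).add (hez.pow_of_ne_zero (by norm_num))
          rw [heq] at h1
          have h2 : Odd (x ^ 4) := (Int.odd_iff.mpr hxodd).pow
          exact (Int.not_odd_iff_even.mpr h1) h2
        · exact Int.odd_iff.mp hoz
      have ht : PythagoreanTriple z (y^2) (x^2) := by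
        show z*z + y^2*(y^2) = x^2*(x^2)
        linear_combination heq
      have hczy : IsCoprime z (y^2) := by
        have h1 : IsCoprime (x^4) (y^4) := (hco.pow (m := 4) (n := 4))
        have h2 : IsCoprime (x^4 + y^4 * (-1)) (y^4) := h1.add_mul_left_left (-1)
        have h3 : x^4 + y^4 * (-1) = z^2 := by linarith
        rw [h3] at h2
        have h4 : IsCoprime (z^2) ((y^2)^2) := by rwa [show ((y:ℤ)^2)^2 = y^4 by ring]
        exact (IsCoprime.pow_left_iff (by norm_num)).mp
          ((IsCoprime.pow_right_iff (by norm_num)).mp h4)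
      obtain ⟨m, nn, hzm, hy2, hx2, hmn, hpar, hm0⟩ :=
        ht.coprime_classification' (Int.isCoprime_iff_gcd_eq_one.mp hczy) hzodd (by positivity)
      have hmn_pos : 0 < m * nn := by nlinarith [pow_pos hy 2]
      have hmpos : 0 < m := by
        rcases hm0.lt_or_eq with h | h
        · exact h
        · exfalso; rw [← h] at hmn_pos; simp at hmn_pos
      have hnpos : 0 < nn := by nlinarith
      have hcomn : IsCoprime m nn := Int.isCoprime_iff_gcd_eq_one.mpr hmn
      obtain ⟨y1, hy1⟩ := hey
      have hcxn : IsCoprime x nn := by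
        have h1 : IsCoprime (m^2) nn := hcomn.pow_left
        have h2 : IsCoprime (m^2 + nn*nn) nn := h1.add_mul_left_left nn
        rw [show m^2 + nn*nn = x^2 by linear_combination -hx2] at h2
        exact (IsCoprime.pow_left_iff two_pos).mp h2
      have hcxm : IsCoprime x m := by
        have h1 : IsCoprime (nn^2) m := hcomn.symm.pow_left
        have h2 : IsCoprime (nn^2 + m*m) m := h1.add_mul_left_left m
        rw [show nn^2 + m*m = x^2 by linear_combination -hx2] at h2
        exact (IsCoprime.pow_left_iff two_pos).mp h2
      obtain ⟨u, v, hx4, hvodd, hcxv, hu0, hv2pos⟩ :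
          ∃ u v : ℤ, x^2 = 4*u^4 + v^4 ∧ v^2 % 2 = 1 ∧ IsCoprime x (v^2) ∧ u ≠ 0 ∧ 0 < v^2 := by
        rcases hpar with ⟨hme, hno⟩ | ⟨hmo, hne⟩
        · -- m even
          obtain ⟨m1, hm1⟩ : ∃ m1, m = 2*m1 := ⟨m/2, by omega⟩
          rw [hm1] at hy2
          rw [hy1] at hy2
          have hprod : m1 * nn = y1^2 := by nlinarith [hy2]
          have hm1pos : 0 < m1 := by nlinarith
          rw [hm1] at hcomn
          have hcm1n : IsCoprime m1 nn := hcomn.of_mul_left_right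
          obtain ⟨u0, hu0⟩ := Int.sq_of_isCoprime hcm1n hprod
          obtain ⟨v0, hv0⟩ := Int.sq_of_isCoprime (c := y1) hcm1n.symm (by linear_combination hprod)
          have hm1u : m1 = u0^2 := by
            rcases hu0 with h | h
            · exact h
            · exfalso; nlinarith [sq_nonneg u0]
          have hnv : nn = v0^2 := by
            rcases hv0 with h | h
            · exact h
            · exfalso; nlinarith [sq_nonneg v0]
          refine ⟨u0, v0, ?_, ?_, ?_, ?_, ?_⟩
          · rw [hx2, hm1, hm1u, hnv]; ring
          · rw [← hnv]; exact hno
          · rw [← hnv]; exact hcxn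
          · intro h0; rw [h0] at hm1u; simp at hm1u; omega
          · rw [← hnv]; exact hnpos
        · -- nn even
          obtain ⟨n1, hn1⟩ : ∃ n1, nn = 2*n1 := ⟨nn/2, by omega⟩
          rw [hn1] at hy2
          rw [hy1] at hy2
          have hprod : n1 * m = y1^2 := by nlinarith [hy2]
          have hn1pos : 0 < n1 := by nlinarith
          rw [hn1] at hcomn
          have hcn1m : IsCoprime n1 m := hcomn.symm.of_mul_left_right
          obtain ⟨u0, hu0⟩ := Int.sq_of_isCoprime hcn1m hprod
          obtain ⟨v0, hv0⟩ := Int.sq_of_isCoprime (c := y1) hcn1m.symm (by linear_combination hprod)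
          have hn1u : n1 = u0^2 := by
            rcases hu0 with h | h
            · exact h
            · exfalso; nlinarith [sq_nonneg u0]
          have hmv : m = v0^2 := by
            rcases hv0 with h | h
            · exact h
            · exfalso; nlinarith [sq_nonneg v0]
          refine ⟨u0, v0, ?_, ?_, ?_, ?_, ?_⟩
          · rw [hx2, hn1, hn1u, hmv]; ring
          · rw [← hmv]; exact hmo
          · rw [← hmv]; exact hcxm
          · intro h0; rw [h0] at hn1u; simp at hn1u; omega
          · rw [← hmv]; exact hmpos
      obtain ⟨A, hA⟩ : (2:ℤ) ∣ (x + v^2) := by omega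
      obtain ⟨B, hB⟩ : (2:ℤ) ∣ (x - v^2) := by omega
      have hu4 : (0:ℤ) < u^4 := by positivity
      have h4ab : 4*(A*B) = 4*u^4 := by linear_combination hx4 - 2*B*hA - (x+v^2)*hB
      have hAB : A * B = u^4 := by linarith
      have hApos : 0 < A := by linarith
      have hvx : v^2 < x := by nlinarith
      have hBpos : 0 < B := by linarith
      have hcAB : IsCoprime A B := by
        obtain ⟨a, b, hab⟩ := hcxv
        have hx' : x = A + B := by linarith
        have hv' : v^2 = A - B := by linarith
        exact ⟨a + b, a - b, by linear_combination hab - a * hx' - b * hv'⟩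
      obtain ⟨s, hs⟩ := fourth_of_coprime hcAB hAB hApos
      obtain ⟨t, ht'⟩ := fourth_of_coprime (c := u) hcAB.symm (by linear_combination hAB) hBpos
      have heq2 : t^4 + v^2 = s^4 := by rw [← hs, ← ht']; linarith
      have hs0 : s ≠ 0 := by intro h0; rw [h0] at hs; simp at hs; omega
      have ht0 : t ≠ 0 := by intro h0; rw [h0] at ht'; simp at ht'; omega
      have hv0 : v ≠ 0 := by intro h0; rw [h0] at hv2pos; simp at hv2pos
      have habs : |t|^4 + |v|^2 = |s|^4 := by
        rw [pow_abs, pow_abs, pow_abs, abs_of_nonneg (by positivity : (0:ℤ) ≤ t^4),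
          abs_of_nonneg (by positivity : (0:ℤ) ≤ v^2), abs_of_nonneg (by positivity : (0:ℤ) ≤ s^4)]
        exact heq2
      have hsx : |s| < x := by
        have h1 : |s| ≤ |s|^4 := le_self_pow₀ (Int.one_le_abs hs0) (by norm_num)
        have h2 : |s|^4 = s^4 := by
          rw [pow_abs, abs_of_nonneg (by positivity : (0:ℤ) ≤ s^4)]
        have h3 : s^4 < x := by rw [← hs]; linarith
        linarith
      rw [Int.abs_eq_natAbs] at hsx
      have hlt : s.natAbs < n := by omega
      exact ih s.natAbs hlt |s| |t| |v| (Int.natAbs_abs s) (abs_pos.mpr hs0)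
        (abs_pos.mpr ht0) (abs_pos.mpr hv0) habs
    · -- y odd
      have ht : PythagoreanTriple (y^2) z (x^2) := by
        show y^2*(y^2) + z*z = x^2*(x^2)
        linear_combination heq
      have hcyz : IsCoprime (y^2) z := by
        have h1 : IsCoprime (x^4) (y^4) := (hco.pow (m := 4) (n := 4))
        have h2 : IsCoprime (x^4 + y^4 * (-1)) (y^4) := h1.add_mul_left_left (-1)
        have h3 : x^4 + y^4 * (-1) = z^2 := by linarith
        rw [h3] at h2
        have h4 : IsCoprime ((y^2)^2) (z^2) := by
          rw [show ((y:ℤ)^2)^2 = y^4 by ring]; exact h2.symm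
        exact (IsCoprime.pow_left_iff (by norm_num)).mp
          ((IsCoprime.pow_right_iff (by norm_num)).mp h4)
      have hy2odd : y ^ 2 % 2 = 1 := Int.odd_iff.mp (hoy.pow)
      obtain ⟨m, nn, hy2, hzm, hx2, hmn, hpar, hm0⟩ :=
        ht.coprime_classification' (Int.isCoprime_iff_gcd_eq_one.mp hcyz) hy2odd (by positivity)
      have hmn_pos : 0 < m * nn := by nlinarith [hz]
      have hmpos : 0 < m := by
        rcases hm0.lt_or_eq with h | h
        · exact h
        · exfalso; rw [← h] at hmn_pos; simp at hmn_pos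
      have hnpos : 0 < nn := by nlinarith
      have heq' : nn^4 + (x*y)^2 = m^4 := by
        have hxy : (x*y)^2 = x^2 * y^2 := by ring
        rw [hxy, hx2, hy2]; ring
      have hmx : m < x := by nlinarith
      have hlt : m.natAbs < n := by omega
      exact ih m.natAbs hlt m nn (x*y) rfl hmpos hnpos (by positivity) heq'
  · -- gcd descent
    have hg0 : Int.gcd x y ≠ 0 := fun h0 => by
      have := Int.gcd_eq_zero_iff.mp h0
      omega
    set g : ℤ := (Int.gcd x y : ℤ) with hgdef
    have hg2 : 2 ≤ g := by
      have : 2 ≤ Int.gcd x y := by omega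
      rw [hgdef]; exact_mod_cast this
    obtain ⟨x1, hx1⟩ : g ∣ x := Int.gcd_dvd_left x y
    obtain ⟨y1, hy1⟩ : g ∣ y := Int.gcd_dvd_right x y
    have hzdvd : g^2 ∣ z := by
      have h4 : (g^2)^2 ∣ z^2 :=
        ⟨x1^4 - y1^4, by rw [show z^2 = x^4 - y^4 by linarith, hx1, hy1]; ring⟩
      exact (Int.pow_dvd_pow_iff two_ne_zero).mp h4
    obtain ⟨z1, hz1⟩ := hzdvd
    have key : y1^4 + z1^2 = x1^4 := by
      have h2 : (g*y1)^4 + (g^2*z1)^2 = (g*x1)^4 := by rw [← hx1, ← hy1, ← hz1]; exact heq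
      have h3 : g^4*(y1^4 + z1^2) = g^4*(x1^4) := by linear_combination h2
      exact mul_left_cancel₀ (by positivity) h3
    have hx1p : 0 < x1 := by nlinarith [hx.trans_eq hx1]
    have hy1p : 0 < y1 := by nlinarith [hy.trans_eq hy1]
    have hz1p : 0 < z1 := by nlinarith [hz.trans_eq hz1]
    have hx1x : x1 < x := by nlinarith [hx.trans_eq hx1]
    have hlt : x1.natAbs < n := by omega
    exact ih x1.natAbs hlt x1 y1 z1 rfl hx1p hy1p hz1p key

theorem stmt_7 (a b c : ℤ) (ha : 0 < a) (hb : 0 < b) (hc : 0 < c)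
    (h : a ^ 4 + c ^ 4 = 2 * b ^ 4) :
    a = b ∧ b = c := by
  set k : ℤ := b ^ 4 - c ^ 4 with hk
  have key : (a*c)^4 + k^2 = (b^2)^4 := by
    rw [hk]
    linear_combination c^4 * h
  have hk0 : k = 0 := by
    by_contra hk0
    have habs : |a*c|^4 + |k|^2 = (b^2)^4 := by
      rw [pow_abs, pow_abs, abs_of_nonneg (by positivity : (0:ℤ) ≤ (a*c)^4),
        abs_of_nonneg (by positivity : (0:ℤ) ≤ k^2)]
      exact key
    exact no_sol (b^2).natAbs (b^2) |a*c| |k| rfl (by positivity)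
      (abs_pos.mpr (by positivity)) (abs_pos.mpr hk0) habs
  have hbc : b = c := by
    have h1 : b^4 = c^4 := by omega
    have h2 : b.natAbs ^ 4 = c.natAbs ^ 4 := by
      have hb' := Int.natAbs_pow b 4
      have hc' := Int.natAbs_pow c 4
      omega
    have := Nat.pow_left_injective (by norm_num : 4 ≠ 0) h2
    omega
  have hab : a = b := by
    have h1 : a^4 = b^4 := by rw [hbc] at h ⊢; linarith
    have h2 : a.natAbs ^ 4 = b.natAbs ^ 4 := by
      have ha' := Int.natAbs_pow a 4
      have hb' := Int.natAbs_pow b 4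
      omega
    have := Nat.pow_left_injective (by norm_num : 4 ≠ 0) h2
    omega
  exact ⟨hab, hbc⟩
end

section
/- The equation a^3 + 4b^3 + c^3 = 0 has no solutions in nonzero integers a, b, c. -/
/-- Eisenstein integers `a + b ω` where `ω² + ω + 1 = 0`. -/
@[ext] structure Eis where
  re : ℤ
  im : ℤ
  deriving DecidableEq

namespace Eis

instance : Zero Eis := ⟨⟨0, 0⟩⟩
instance : One Eis := ⟨⟨1, 0⟩⟩
instance : Add Eis := ⟨fun z w => ⟨z.re + w.re, z.im + w.im⟩⟩
instance : Neg Eis := ⟨fun z => ⟨-z.re, -z.im⟩⟩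
instance : Mul Eis :=
  ⟨fun z w => ⟨z.re * w.re - z.im * w.im, z.re * w.im + z.im * w.re - z.im * w.im⟩⟩

@[simp] theorem zero_re : (0 : Eis).re = 0 := rfl
@[simp] theorem zero_im : (0 : Eis).im = 0 := rfl
@[simp] theorem one_re : (1 : Eis).re = 1 := rfl
@[simp] theorem one_im : (1 : Eis).im = 0 := rfl
@[simp] theorem add_re (z w : Eis) : (z + w).re = z.re + w.re := rfl
@[simp] theorem add_im (z w : Eis) : (z + w).im = z.im + w.im := rfl
@[simp] theorem neg_re (z : Eis) : (-z).re = -z.re := rfl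
@[simp] theorem neg_im (z : Eis) : (-z).im = -z.im := rfl
@[simp] theorem mul_re (z w : Eis) : (z * w).re = z.re * w.re - z.im * w.im := rfl
@[simp] theorem mul_im (z w : Eis) :
    (z * w).im = z.re * w.im + z.im * w.re - z.im * w.im := rfl

instance addCommGroup : AddCommGroup Eis := by
  refine
  { add := (· + ·)
    zero := (0 : Eis)
    sub := fun a b => a + -b
    neg := Neg.neg
    nsmul := @nsmulRec Eis ⟨0⟩ ⟨(· + ·)⟩
    zsmul := @zsmulRec Eis ⟨0⟩ ⟨(· + ·)⟩ ⟨Neg.neg⟩ (@nsmulRec Eis ⟨0⟩ ⟨(· + ·)⟩)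
    add_assoc := ?_
    zero_add := ?_
    add_zero := ?_
    neg_add_cancel := ?_
    add_comm := ?_ } <;>
  intros <;>
  ext <;>
  simp [add_comm, add_left_comm]

@[simp] theorem sub_re (z w : Eis) : (z - w).re = z.re - w.re := rfl
@[simp] theorem sub_im (z w : Eis) : (z - w).im = z.im - w.im := rfl

instance addGroupWithOne : AddGroupWithOne Eis :=
  { Eis.addCommGroup with
    natCast := fun n => ⟨n, 0⟩
    intCast := fun n => ⟨n, 0⟩
    natCast_zero := by ext <;> simp
    natCast_succ := fun n => by ext <;> simp
    intCast_ofNat := fun n => rfl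
    intCast_negSucc := fun n => by
      show (⟨Int.negSucc n, 0⟩ : Eis) = -(⟨((n+1 : ℕ) : ℤ), 0⟩ : Eis)
      ext <;> simp [Int.negSucc_eq]
    one := 1 }

instance commRing : CommRing Eis := by
  refine
  { Eis.addGroupWithOne with
    mul := (· * ·)
    npow := @npowRec Eis ⟨1⟩ ⟨(· * ·)⟩,
    add_comm := ?_
    left_distrib := ?_
    right_distrib := ?_
    zero_mul := ?_
    mul_zero := ?_
    mul_assoc := ?_
    one_mul := ?_
    mul_one := ?_
    mul_comm := ?_ } <;>
  intros <;>
  ext <;>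
  simp <;>
  ring

instance nontrivial : Nontrivial Eis :=
  ⟨⟨0, 1, fun h => by simpa using congrArg Eis.re h⟩⟩

@[simp] theorem natCast_re (n : ℕ) : (n : Eis).re = n := rfl
@[simp] theorem natCast_im (n : ℕ) : (n : Eis).im = 0 := rfl
@[simp] theorem intCast_re (n : ℤ) : (n : Eis).re = n := rfl
@[simp] theorem intCast_im (n : ℤ) : (n : Eis).im = 0 := rfl
@[simp] theorem ofNat_re (n : ℕ) [n.AtLeastTwo] : (no_index (OfNat.ofNat n) : Eis).re = OfNat.ofNat n := rfl
@[simp] theorem ofNat_im (n : ℕ) [n.AtLeastTwo] : (no_index (OfNat.ofNat n) : Eis).im = 0 := rfl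

/-- conjugation: complex conjugate, `conj (a+bω) = a - b - bω`. -/
def conj (z : Eis) : Eis := ⟨z.re - z.im, -z.im⟩

@[simp] theorem conj_re (z : Eis) : (conj z).re = z.re - z.im := rfl
@[simp] theorem conj_im (z : Eis) : (conj z).im = -z.im := rfl

/-- norm -/
def norm (z : Eis) : ℤ := z.re * z.re - z.re * z.im + z.im * z.im

theorem norm_def (z : Eis) : norm z = z.re * z.re - z.re * z.im + z.im * z.im := rfl

theorem norm_mul (z w : Eis) : norm (z * w) = norm z * norm w := by
  simp [norm_def]; ring

theorem norm_nonneg (z : Eis) : 0 ≤ norm z := by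
  have := sq_nonneg (2 * z.re - z.im)
  have := sq_nonneg z.im
  simp [norm_def]; nlinarith

@[simp] theorem norm_zero : norm 0 = 0 := by simp [norm_def]
@[simp] theorem norm_one : norm 1 = 1 := by simp [norm_def]

theorem norm_eq_zero_iff {z : Eis} : norm z = 0 ↔ z = 0 := by
  constructor
  · intro h
    have h4 : (2 * z.re - z.im) ^ 2 + 3 * z.im ^ 2 = 0 := by
      simp [norm_def] at h; nlinarith
    have him : z.im = 0 := by nlinarith [sq_nonneg (2 * z.re - z.im), sq_nonneg z.im]
    have hre : z.re = 0 := by nlinarith [sq_nonneg z.re]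
    ext <;> simp [him, hre]
  · rintro rfl; simp

theorem mul_conj (z : Eis) : z * conj z = (norm z : Eis) := by
  ext <;> simp [norm_def] <;> ring

theorem norm_conj (z : Eis) : norm (conj z) = norm z := by simp [norm_def]; ring

theorem norm_dvd_norm {z w : Eis} (h : z ∣ w) : norm z ∣ norm w := by
  obtain ⟨c, rfl⟩ := h; exact ⟨norm c, norm_mul _ _⟩

theorem norm_eq_one_of_isUnit {z : Eis} (h : IsUnit z) : norm z = 1 := by
  obtain ⟨u, hu⟩ := h
  have h1 : z ∣ 1 := ⟨(u⁻¹ : Eisˣ), by rw [← hu]; simp [← Units.val_mul]⟩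
  have := norm_dvd_norm h1
  rw [norm_one] at this
  exact Int.eq_one_of_dvd_one (norm_nonneg z) this

theorem isUnit_of_norm_eq_one {z : Eis} (h : norm z = 1) : IsUnit z :=
  IsUnit.of_mul_eq_one (conj z) (by rw [mul_conj, h]; rfl)

end Eis
namespace Eis

def divAux (c n : ℤ) : ℤ := (2 * c + n) / (2 * n)

theorem divAux_bound {c n : ℤ} (hn : 0 < n) :
    -n ≤ 2 * (c - divAux c n * n) ∧ 2 * (c - divAux c n * n) ≤ n := by
  have h1 := Int.mul_ediv_add_emod (2 * c + n) (2 * n)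
  have h2 := Int.emod_nonneg (2 * c + n) (by omega : (2 * n) ≠ 0)
  have h3 := Int.emod_lt_of_pos (2 * c + n) (by omega : (0:ℤ) < 2 * n)
  have key : 2 * (c - divAux c n * n) = (2 * c + n) % (2 * n) - n := by
    rw [divAux]; linear_combination -h1
  omega

instance : Div Eis :=
  ⟨fun x y => ⟨divAux (x * conj y).re (norm y), divAux (x * conj y).im (norm y)⟩⟩

theorem div_def (x y : Eis) :
    x / y = ⟨divAux (x * conj y).re (norm y), divAux (x * conj y).im (norm y)⟩ := rfl

instance : Mod Eis := ⟨fun x y => x - y * (x / y)⟩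

theorem mod_def (x y : Eis) : x % y = x - y * (x / y) := rfl

theorem norm_pos {z : Eis} (hz : z ≠ 0) : 0 < norm z :=
  lt_of_le_of_ne (norm_nonneg z) (fun h => hz (norm_eq_zero_iff.mp h.symm))

theorem norm_mod_lt (x : Eis) {y : Eis} (hy : y ≠ 0) : norm (x % y) < norm y := by
  have hn : 0 < norm y := norm_pos hy
  set n := norm y with hnd
  set c1 := (x * conj y).re with hc1
  set c2 := (x * conj y).im with hc2
  set q1 := divAux c1 n with hq1
  set q2 := divAux c2 n with hq2
  have key : (x % y) * conj y = ⟨c1 - q1 * n, c2 - q2 * n⟩ := by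
    have hyc : y * conj y = (n : Eis) := mul_conj y
    have : (x % y) * conj y = x * conj y - (x / y) * (y * conj y) := by
      rw [mod_def]; ring
    rw [this, hyc, div_def, ← hc1, ← hc2, ← hq1, ← hq2]
    ext <;> simp [hc1, hc2] <;> ring
  set E1 := c1 - q1 * n with hE1
  set E2 := c2 - q2 * n with hE2
  have hN : norm (x % y) * n = E1 * E1 - E1 * E2 + E2 * E2 := by
    have h1 : norm ((x % y) * conj y) = norm (x % y) * n := by
      rw [norm_mul, norm_conj]
    rw [key] at h1
    rw [← h1]; simp [norm_def]
  obtain ⟨b1l, b1u⟩ := divAux_bound (c := c1) hn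
  obtain ⟨b2l, b2u⟩ := divAux_bound (c := c2) hn
  rw [← hE1] at b1l b1u
  rw [← hE2] at b2l b2u
  have hp1 : (n - 2 * E1) * (n + 2 * E1) ≥ 0 := mul_nonneg (by omega) (by omega)
  have hp2 : (n - 2 * E2) * (n + 2 * E2) ≥ 0 := mul_nonneg (by omega) (by omega)
  have hs : (E1 + E2) ^ 2 ≥ 0 := sq_nonneg _
  nlinarith [hN, hp1, hp2, hs, hn]

theorem natAbs_norm_mod_lt (x : Eis) {y : Eis} (hy : y ≠ 0) :
    (norm (x % y)).natAbs < (norm y).natAbs := by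
  have := norm_mod_lt x hy
  have h0 := norm_nonneg (x % y)
  omega

theorem abs_natCast_norm (x : Eis) : ((norm x).natAbs : ℤ) = norm x :=
  Int.natAbs_of_nonneg (norm_nonneg _)

theorem norm_le_norm_mul_left (x : Eis) {y : Eis} (hy : y ≠ 0) :
    (norm x).natAbs ≤ (norm (x * y)).natAbs := by
  rw [norm_mul, Int.natAbs_mul]
  exact le_mul_of_one_le_right (Nat.zero_le _)
    (Int.ofNat_le.1 (by rw [abs_natCast_norm]; exact Int.add_one_le_of_lt (norm_pos hy)))

instance : EuclideanDomain Eis :=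
  { Eis.commRing, Eis.nontrivial with
    quotient := (· / ·)
    remainder := (· % ·)
    quotient_zero := fun x => by
      show x / 0 = 0
      rw [div_def]
      ext <;> simp [divAux, conj, norm_def]
    quotient_mul_add_remainder_eq := fun x y => by
      show y * (x / y) + (x % y) = x
      rw [mod_def]; ring
    r := _
    r_wellFounded := (measure (Int.natAbs ∘ Eis.norm)).wf
    remainder_lt := fun x y hy => natAbs_norm_mod_lt x hy
    mul_left_not_lt := fun a b hb0 => not_lt_of_ge <| norm_le_norm_mul_left a hb0 }

end Eis
namespace Eis

theorem unit_cases {z : Eis} (h : IsUnit z) :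
    z = ⟨1, 0⟩ ∨ z = ⟨-1, 0⟩ ∨ z = ⟨0, 1⟩ ∨ z = ⟨0, -1⟩ ∨ z = ⟨1, 1⟩ ∨ z = ⟨-1, -1⟩ := by
  have hn : norm z = 1 := norm_eq_one_of_isUnit h
  obtain ⟨a, b⟩ := z
  simp only [norm_def] at hn
  have hb : -1 ≤ b ∧ b ≤ 1 := by constructor <;> nlinarith [sq_nonneg (2 * a - b), sq_nonneg b]
  have ha : -1 ≤ a ∧ a ≤ 1 := by constructor <;> nlinarith [sq_nonneg (2 * b - a), sq_nonneg a]
  obtain ⟨hb1, hb2⟩ := hb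
  obtain ⟨ha1, ha2⟩ := ha
  interval_cases a <;> interval_cases b <;> simp_all <;> omega

theorem cube_coords (p q : ℤ) :
    (⟨p, q⟩ : Eis) ^ 3 = ⟨p^3 + q^3 - 3*p*q^2, 3*p^2*q - 3*p*q^2⟩ := by
  have h3 : (⟨p, q⟩ : Eis) ^ 3 = ⟨p, q⟩ * ⟨p, q⟩ * ⟨p, q⟩ := by ring
  rw [h3]
  ext <;> simp <;> ring

theorem even_second_coord (p q : ℤ) : Even (3*p^2*q - 3*p*q^2) := by
  rcases Int.even_or_odd p with ⟨k, hk⟩ | ⟨k, hk⟩ <;>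
    rcases Int.even_or_odd q with ⟨l, hl⟩ | ⟨l, hl⟩ <;> subst hk hl
  · exact ⟨12*k^2*l - 12*k*l^2, by ring⟩
  · exact ⟨6*k^2*(2*l+1) - 3*k*(2*l+1)^2, by ring⟩
  · exact ⟨3*(2*k+1)^2*l - 6*(2*k+1)*l^2, by ring⟩
  · exact ⟨3*(2*k+1)*(2*l+1)*(k-l), by ring⟩

end Eis
open Eis in
theorem eis_cube_param {a b u : ℤ} (hcop : IsCoprime a b) (hodd : Odd (a + b))
    (hu2 : Odd u) (hu3 : ¬ (3:ℤ) ∣ u) (h : a^2 + 3*b^2 = u^3) :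
    ∃ p q : ℤ, a + b = p^3 + q^3 - 3*p*q^2 ∧ 2*b = 3*p^2*q - 3*p*q^2 := by
  set α : Eis := ⟨a + b, 2*b⟩ with hα
  have hnormα : Eis.norm α = u ^ 3 := by
    simp only [Eis.norm_def, hα]
    linear_combination h
  have hconjα : Eis.conj α = ⟨a - b, -(2*b)⟩ := by
    ext <;> simp [hα, Eis.conj] <;> ring
  have hprod : α * Eis.conj α = ((u : ℤ) : Eis) ^ 3 := by
    rw [Eis.mul_conj α, hnormα]; push_cast; ring
  have hu0 : u ≠ 0 := by rintro rfl; simp at hu2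
  have hα0 : α ≠ 0 := by
    intro h0
    rw [h0, Eis.norm_zero] at hnormα
    exact hu0 ((pow_eq_zero_iff (by norm_num : (3:ℕ) ≠ 0)).mp hnormα.symm)
  have hcop2u : IsCoprime (2:ℤ) u := by
    rw [Int.prime_two.coprime_iff_not_dvd]
    obtain ⟨k, hk⟩ := hu2
    rintro ⟨c, hc⟩
    omega
  have hcop3u : IsCoprime (3:ℤ) u := by
    rw [Int.prime_three.coprime_iff_not_dvd]
    exact hu3
  have hcopα : IsCoprime α (Eis.conj α) := by
    apply isCoprime_of_irreducible_dvd
    · rintro ⟨h1, -⟩; exact hα0 h1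
    · intro z hz hzα hzconj
      have hzprime : Prime z := irreducible_iff_prime.mp hz
      have hnz : Eis.norm z ∣ u ^ 3 := hnormα ▸ Eis.norm_dvd_norm hzα
      have hnz1 : Eis.norm z ≠ 1 := fun h1 => hz.not_isUnit (Eis.isUnit_of_norm_eq_one h1)
      have hz2 : ¬ z ∣ ((2:ℤ) : Eis) := by
        intro hd
        have hdn : Eis.norm z ∣ Eis.norm ((2:ℤ) : Eis) := Eis.norm_dvd_norm hd
        have h4 : Eis.norm ((2:ℤ) : Eis) = 4 := by simp [Eis.norm_def]
        rw [h4] at hdn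
        have hc : IsCoprime (4:ℤ) (u^3) := by
          have := (hcop2u.pow (m := 2) (n := 3))
          norm_num at this
          exact this
        have := hc.isUnit_of_dvd' hdn hnz
        rcases Int.isUnit_iff.mp this with h1 | h1
        · exact hnz1 h1
        · have := Eis.norm_nonneg z; omega
      have hzsqrt : ¬ z ∣ (⟨1, 2⟩ : Eis) := by
        intro hd
        have hdn : Eis.norm z ∣ Eis.norm (⟨1,2⟩ : Eis) := Eis.norm_dvd_norm hd
        have h3 : Eis.norm (⟨1,2⟩ : Eis) = 3 := by simp [Eis.norm_def]
        rw [h3] at hdn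
        have hc : IsCoprime (3:ℤ) (u^3) := hcop3u.pow_right
        have := hc.isUnit_of_dvd' hdn hnz
        rcases Int.isUnit_iff.mp this with h1 | h1
        · exact hnz1 h1
        · have := Eis.norm_nonneg z; omega
      -- z divides (2a : Eis) and (2b) * sqrt(-3)
      have h2a : z ∣ ((2:ℤ) : Eis) * ((a:ℤ) : Eis) := by
        have he : α + Eis.conj α = ((2:ℤ) : Eis) * ((a:ℤ) : Eis) := by
          rw [hconjα]; ext <;> simp [hα] <;> ring
        rw [← he]; exact dvd_add hzα hzconj
      have h2b : z ∣ ((2:ℤ) : Eis) * (((b:ℤ) : Eis) * (⟨1, 2⟩ : Eis)) := by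
        have he : α - Eis.conj α = ((2:ℤ) : Eis) * (((b:ℤ) : Eis) * (⟨1, 2⟩ : Eis)) := by
          rw [hconjα]; ext <;> simp [hα] <;> ring
        rw [← he]; exact dvd_sub hzα hzconj
      have hza : z ∣ ((a:ℤ) : Eis) := (hzprime.dvd_mul.mp h2a).resolve_left hz2
      have hzb : z ∣ ((b:ℤ) : Eis) := by
        rcases hzprime.dvd_mul.mp h2b with h1 | h1
        · exact absurd h1 hz2
        · exact (hzprime.dvd_mul.mp h1).resolve_right hzsqrt
      have hmap : IsCoprime ((a:ℤ) : Eis) ((b:ℤ) : Eis) := hcop.map (Int.castRingHom Eis)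
      exact hzprime.not_unit (hmap.isUnit_of_dvd' hza hzb)
  obtain ⟨γ, hγ⟩ := exists_associated_pow_of_mul_eq_pow' hcopα hprod
  obtain ⟨ε, hε⟩ := hγ
  obtain ⟨p, q⟩ := γ
  rw [Eis.cube_coords] at hε
  set X := p^3 + q^3 - 3*p*q^2 with hX
  set Y := 3*p^2*q - 3*p*q^2 with hY
  have hEvenY : Even Y := Eis.even_second_coord p q
  have hR := congrArg Eis.re hε
  have hI := congrArg Eis.im hε
  rcases Eis.unit_cases ε.isUnit with hu | hu | hu | hu | hu | hu <;>
    rw [hu] at hR hI <;>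
    simp only [Eis.mul_re, Eis.mul_im, hα] at hR hI
  · -- ε = 1 : X = a + b, Y = 2b
    refine ⟨p, q, ?_, ?_⟩ <;> [linear_combination -hR; linear_combination -hI]
  · -- ε = -1 : -X = a + b, -Y = 2b
    refine ⟨-p, -q, ?_, ?_⟩ <;> [linear_combination -hR; linear_combination -hI]
  · -- ε = ω : re gives -Y = a+b
    exfalso
    have hEv : Even (a + b) := by
      have : a + b = -Y := by linear_combination -hR
      rw [this]; exact hEvenY.neg
    exact (Int.not_odd_iff_even.mpr hEv) hodd
  · -- ε = -ω : re gives Y = a+b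
    exfalso
    have hEv : Even (a + b) := by
      have : a + b = Y := by linear_combination -hR
      rw [this]; exact hEvenY
    exact (Int.not_odd_iff_even.mpr hEv) hodd
  · -- ε = ⟨1,1⟩ (= -ω²) : re: X - Y = a+b, im: X = 2b
    exfalso
    have hEvX : Even X := ⟨b, by linarith [hI]⟩
    have hEv : Even (a + b) := by
      have : a + b = X - Y := by linear_combination -hR
      rw [this]; exact hEvX.sub hEvenY
    exact (Int.not_odd_iff_even.mpr hEv) hodd
  · -- ε = ⟨-1,-1⟩ (= ω²) : re: Y - X = a+b, im: -X = 2b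
    exfalso
    have hEvX : Even X := ⟨-b, by linarith [hI]⟩
    have hEv : Even (a + b) := by
      have : a + b = Y - X := by linear_combination -hR
      rw [this]; exact hEvenY.sub hEvX
    exact (Int.not_odd_iff_even.mpr hEv) hodd
section Descent

theorem exists_prime_common_divisor {a b : ℤ} (h : ¬ IsCoprime a b) (hab : ¬ (a = 0 ∧ b = 0)) :
    ∃ t : ℤ, Prime t ∧ t ∣ a ∧ t ∣ b := by
  have hg : Int.gcd a b ≠ 1 := fun h1 => h (Int.isCoprime_iff_gcd_eq_one.mpr h1)
  have hg0 : Int.gcd a b ≠ 0 := fun h0 => hab (Int.gcd_eq_zero_iff.mp h0)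
  obtain ⟨p, hp, hpd⟩ := Nat.exists_prime_and_dvd hg
  refine ⟨(p : ℤ), Nat.prime_iff_prime_int.mp hp, ?_, ?_⟩
  · exact dvd_trans (Int.natCast_dvd_natCast.mpr hpd) (Int.gcd_dvd_left a b)
  · exact dvd_trans (Int.natCast_dvd_natCast.mpr hpd) (Int.gcd_dvd_right a b)

theorem cube_eq_cube {v w : ℤ} (h : v ^ 3 = w ^ 3) : v = w :=
  (Odd.strictMono_pow (R := ℤ) ⟨1, by norm_num⟩).injective h

theorem small_cube_cases {w c : ℤ} (hw : w ≠ 0) (hc : c = -2 ∨ c = 0 ∨ c = 2)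
    (h : 4 * w ^ 3 = c) : False := by
  have h1 : w ^ 3 ≠ 0 := pow_ne_zero _ hw
  rcases h1.lt_or_gt with h3 | h3
  · have h4 : w ^ 3 + 1 ≤ 0 := h3
    rcases hc with rfl | rfl | rfl <;> linarith
  · have h4 : 1 ≤ w ^ 3 := h3
    rcases hc with rfl | rfl | rfl <;> linarith

theorem descent_even {D E v : ℤ} (hcop : IsCoprime D E) (hsum : Even (D + E))
    (hprod : D * E * (D + E) = 4 * v ^ 3) (hv : v ≠ 0) :
    ∃ d e w : ℤ, d ^ 3 + e ^ 3 = 4 * w ^ 3 ∧ d ≠ 0 ∧ e ≠ 0 ∧ w ≠ 0 ∧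
      w.natAbs < v.natAbs := by
  have hne : D * E * (D + E) ≠ 0 := by
    rw [hprod]; exact mul_ne_zero (by norm_num) (pow_ne_zero _ hv)
  have hD0 : D ≠ 0 := fun h => hne (by rw [h]; ring)
  have hE0 : E ≠ 0 := fun h => hne (by rw [h]; ring)
  have hF0 : D + E ≠ 0 := fun h => hne (by rw [h]; ring)
  -- D and E are odd
  have hoD : Odd D := by
    rcases Int.even_or_odd D with hD | hD
    · exfalso
      have hE : Even E := by
        obtain ⟨k, hk⟩ := hsum; obtain ⟨l, hl⟩ := hD
        exact ⟨k - l, by omega⟩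
      obtain ⟨k, hk⟩ := hD
      obtain ⟨l, hl⟩ := hE
      have h2 : (2:ℤ) ∣ D := ⟨k, by omega⟩
      have h2' : (2:ℤ) ∣ E := ⟨l, by omega⟩
      have := hcop.isUnit_of_dvd' h2 h2'
      rcases Int.isUnit_iff.mp this with h | h <;> norm_num at h
    · exact hD
  have hoE : Odd E := by
    obtain ⟨k, hk⟩ := hsum
    obtain ⟨l, hl⟩ := hoD
    exact ⟨k - l - 1, by omega⟩
  -- 4 divides D + E
  have hc2D : IsCoprime (2:ℤ) D := by
    rw [Int.prime_two.coprime_iff_not_dvd]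
    obtain ⟨l, hl⟩ := hoD; rintro ⟨c, hc⟩; omega
  have hc2E : IsCoprime (2:ℤ) E := by
    rw [Int.prime_two.coprime_iff_not_dvd]
    obtain ⟨l, hl⟩ := hoE; rintro ⟨c, hc⟩; omega
  have hc4 : IsCoprime (4:ℤ) (D * E) := by
    have h : IsCoprime ((2:ℤ) ^ 2) (D * E) := IsCoprime.pow_left (hc2D.mul_right hc2E)
    norm_num at h
    exact h
  have h4DE : (4:ℤ) ∣ (D + E) := by
    refine hc4.dvd_of_dvd_mul_right ⟨v ^ 3, ?_⟩
    linear_combination hprod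
  obtain ⟨F₁, hF1⟩ := h4DE
  have hprod2 : D * E * F₁ = v ^ 3 := by
    have h := hprod
    rw [hF1] at h
    linarith
  have hF10 : F₁ ≠ 0 := fun h => hF0 (by rw [hF1, h, mul_zero])
  -- coprimality with F₁
  have hcDS : IsCoprime D (D + E) := by
    have h := hcop.add_mul_left_right 1
    rwa [mul_one, add_comm] at h
  have hcES : IsCoprime E (D + E) := by
    have h := hcop.symm.add_mul_left_right 1
    rwa [mul_one] at h
  have hdvdF1 : F₁ ∣ (D + E) := ⟨4, by linarith [hF1]⟩
  have hcDF : IsCoprime D F₁ := hcDS.of_isCoprime_of_dvd_right hdvdF1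
  have hcEF : IsCoprime E F₁ := hcES.of_isCoprime_of_dvd_right hdvdF1
  -- extract cubes
  obtain ⟨d, hd⟩ := Int.eq_pow_of_mul_eq_pow_odd_left (hcop.mul_right hcDF)
    (⟨1, by norm_num⟩ : Odd 3) (show D * (E * F₁) = v ^ 3 by linear_combination hprod2)
  obtain ⟨e, he⟩ := Int.eq_pow_of_mul_eq_pow_odd_left (hcop.symm.mul_right hcEF)
    (⟨1, by norm_num⟩ : Odd 3) (show E * (D * F₁) = v ^ 3 by linear_combination hprod2)
  obtain ⟨w, hw⟩ := Int.eq_pow_of_mul_eq_pow_odd_left (hcDF.symm.mul_right hcEF.symm)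
    (⟨1, by norm_num⟩ : Odd 3) (show F₁ * (D * E) = v ^ 3 by linear_combination hprod2)
  have hd0 : d ≠ 0 := fun h => hD0 (by rw [hd, h]; ring)
  have he0 : e ≠ 0 := fun h => hE0 (by rw [he, h]; ring)
  have hw0 : w ≠ 0 := fun h => hF10 (by rw [hw, h]; ring)
  have hmain : d ^ 3 + e ^ 3 = 4 * w ^ 3 := by
    rw [← hd, ← he, ← hw, ← hF1]
  have hv_eq : v = d * e * w := by
    apply cube_eq_cube
    rw [mul_pow, mul_pow, ← hd, ← he, ← hw]
    linear_combination -hprod2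
  refine ⟨d, e, w, hmain, hd0, he0, hw0, ?_⟩
  by_contra hge
  push_neg at hge
  have habs : v.natAbs = d.natAbs * e.natAbs * w.natAbs := by
    rw [hv_eq, Int.natAbs_mul, Int.natAbs_mul]
  have hd1 : 1 ≤ d.natAbs := Int.natAbs_pos.mpr hd0
  have he1 : 1 ≤ e.natAbs := Int.natAbs_pos.mpr he0
  have hw1 : 1 ≤ w.natAbs := Int.natAbs_pos.mpr hw0
  have hkey : d.natAbs * e.natAbs ≤ 1 := by
    have h1 : d.natAbs * e.natAbs * w.natAbs ≤ 1 * w.natAbs := by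
      calc d.natAbs * e.natAbs * w.natAbs = v.natAbs := habs.symm
        _ ≤ w.natAbs := hge
        _ = 1 * w.natAbs := (one_mul _).symm
    exact Nat.le_of_mul_le_mul_right h1 (by omega : 0 < w.natAbs)
  have hde1 : d.natAbs = 1 ∧ e.natAbs = 1 := by
    have h2 : 1 ≤ d.natAbs * e.natAbs := Nat.mul_pos hd1 he1
    have h3 : d.natAbs * e.natAbs = 1 := le_antisymm hkey h2
    exact ⟨Nat.eq_one_of_mul_eq_one_right h3, Nat.eq_one_of_mul_eq_one_left h3⟩
  have hdval : d = 1 ∨ d = -1 := Int.natAbs_eq_iff.mp hde1.1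
  have heval : e = 1 ∨ e = -1 := Int.natAbs_eq_iff.mp hde1.2
  apply small_cube_cases hw0 (c := d ^ 3 + e ^ 3) _ hmain.symm
  rcases hdval with rfl | rfl <;> rcases heval with rfl | rfl <;> norm_num

theorem descent_core {D E v : ℤ} (hcop : IsCoprime D E)
    (hprod : D * E * (D + E) = 4 * v ^ 3) (hv : v ≠ 0) :
    ∃ d e w : ℤ, d ^ 3 + e ^ 3 = 4 * w ^ 3 ∧ d ≠ 0 ∧ e ≠ 0 ∧ w ≠ 0 ∧
      w.natAbs < v.natAbs := by
  rcases Int.even_or_odd D with hD | hD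
  · have hcop' : IsCoprime (-E) (D + E) := by
      have h := (hcop.symm.neg_left).add_mul_left_right (-1)
      rwa [show D + -E * -1 = D + E by ring] at h
    have hsum' : Even (-E + (D + E)) := by
      rwa [show -E + (D + E) = D by ring]
    have hprod' : (-E) * (D + E) * (-E + (D + E)) = 4 * (-v) ^ 3 := by
      linear_combination -hprod
    obtain ⟨d, e, w, h1, h2, h3, h4, h5⟩ := descent_even hcop' hsum' hprod' (neg_ne_zero.mpr hv)
    exact ⟨d, e, w, h1, h2, h3, h4, by rwa [Int.natAbs_neg] at h5⟩
  · rcases Int.even_or_odd E with hE | hE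
    · have hcop' : IsCoprime (-D) (D + E) := by
        have h := (hcop.neg_left).add_mul_left_right (-1)
        rwa [show E + -D * -1 = D + E by ring] at h
      have hsum' : Even (-D + (D + E)) := by
        rwa [show -D + (D + E) = E by ring]
      have hprod' : (-D) * (D + E) * (-D + (D + E)) = 4 * (-v) ^ 3 := by
        linear_combination -hprod
      obtain ⟨d, e, w, h1, h2, h3, h4, h5⟩ := descent_even hcop' hsum' hprod' (neg_ne_zero.mpr hv)
      exact ⟨d, e, w, h1, h2, h3, h4, by rwa [Int.natAbs_neg] at h5⟩
    · refine descent_even hcop ?_ hprod hv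
      obtain ⟨k, hk⟩ := hD
      obtain ⟨l, hl⟩ := hE
      exact ⟨k + l + 1, by omega⟩

end Descent
theorem int_dvd_cube_sub_self (t : ℤ) : (3:ℤ) ∣ t ^ 3 - t := by
  have key : ∀ s : ZMod 3, s ^ 3 - s = 0 := by decide
  have h : ((t ^ 3 - t : ℤ) : ZMod 3) = 0 := by push_cast; exact key (t : ZMod 3)
  exact_mod_cast (ZMod.intCast_zmod_eq_zero_iff_dvd _ 3).mp h

theorem three_dvd_of_prime_dvd_three {t B : ℤ} (ht : Prime t) (h3 : t ∣ 3) (hB : t ∣ B) :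
    (3:ℤ) ∣ B :=
  ((ht.associated_of_dvd Int.prime_three h3).symm.dvd.trans hB)

theorem descent_step {x y z : ℤ} (hx : x ≠ 0) (hy : y ≠ 0) (hz : z ≠ 0)
    (hcop : IsCoprime x y) (heq : x ^ 3 + y ^ 3 = 4 * z ^ 3) :
    ∃ d e w : ℤ, d ^ 3 + e ^ 3 = 4 * w ^ 3 ∧ d ≠ 0 ∧ e ≠ 0 ∧ w ≠ 0 ∧
      w.natAbs < z.natAbs := by
  -- x and y are odd
  have hEsum : Even (x ^ 3 + y ^ 3) := ⟨2 * z ^ 3, by linarith⟩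
  have hparity : (Even x ↔ Even y) := by
    have h := Int.even_add.mp hEsum
    simpa [Int.even_pow] using h
  have hox : Odd x := by
    rcases Int.even_or_odd x with hex | hox
    · exfalso
      have hey : Even y := hparity.mp hex
      obtain ⟨k, hk⟩ := hex
      obtain ⟨l, hl⟩ := hey
      have h2x : (2:ℤ) ∣ x := ⟨k, by omega⟩
      have h2y : (2:ℤ) ∣ y := ⟨l, by omega⟩
      have := hcop.isUnit_of_dvd' h2x h2y
      rcases Int.isUnit_iff.mp this with h | h <;> norm_num at h
    · exact hox
  have hoy : Odd y := by
    rcases Int.even_or_odd y with hey | hoy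
    · exact absurd hox (Int.not_odd_iff_even.mpr (hparity.mpr hey))
    · exact hoy
  -- write x = m + n, y = m - n
  obtain ⟨k, hk⟩ := hox
  obtain ⟨l, hl⟩ := hoy
  obtain ⟨m, n, hx', hy'⟩ : ∃ m n : ℤ, x = m + n ∧ y = m - n :=
    ⟨k + l + 1, k - l, by omega, by omega⟩
  have hoxmn : Odd x := ⟨k, hk⟩
  have hAB : (2 * m) * (m ^ 2 + 3 * n ^ 2) = 4 * z ^ 3 := by
    rw [hx', hy'] at heq
    linear_combination heq
  have hcopmn : IsCoprime m n := by
    obtain ⟨r, s, hrs⟩ := hcop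
    rw [hx', hy'] at hrs
    exact ⟨r + s, r - s, by linear_combination hrs⟩
  have hoddmn : Odd (m + n) := hx' ▸ hoxmn
  have hBodd : Odd (m ^ 2 + 3 * n ^ 2) := by
    rcases Int.even_or_odd m with ⟨a, hma⟩ | ⟨a, hma⟩
    · rcases Int.even_or_odd n with ⟨c, hnc⟩ | ⟨c, hnc⟩
      · exfalso; obtain ⟨j, hj⟩ := hoddmn; omega
      · exact ⟨2 * a ^ 2 + 6 * c ^ 2 + 6 * c + 1, by rw [hma, hnc]; ring⟩
    · rcases Int.even_or_odd n with ⟨c, hnc⟩ | ⟨c, hnc⟩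
      · exact ⟨2 * a ^ 2 + 2 * a + 6 * c ^ 2, by rw [hma, hnc]; ring⟩
      · exfalso; obtain ⟨j, hj⟩ := hoddmn; omega
  have hB0 : m ^ 2 + 3 * n ^ 2 ≠ 0 := by
    intro h0; rw [h0] at hBodd; simp at hBodd
  by_cases h3 : (3:ℤ) ∣ z
  · -- CASE B : 3 ∣ z
    have h3xy : (3:ℤ) ∣ x + y := by
      have h34 : (3:ℤ) ∣ 4 * z ^ 3 := Dvd.dvd.mul_left (dvd_pow h3 (by norm_num)) 4
      have hsum3 : (3:ℤ) ∣ x ^ 3 + y ^ 3 := heq ▸ h34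
      have hid : x + y = (x ^ 3 + y ^ 3) - (x ^ 3 - x) - (y ^ 3 - y) := by ring
      rw [hid]
      exact dvd_sub (dvd_sub hsum3 (int_dvd_cube_sub_self x)) (int_dvd_cube_sub_self y)
    have h3m : (3:ℤ) ∣ m := by
      have h2m : (3:ℤ) ∣ 2 * m := by
        have hxy2m : x + y = 2 * m := by rw [hx', hy']; ring
        rwa [hxy2m] at h3xy
      rcases (Int.prime_three.dvd_mul.mp h2m) with h | h
      · norm_num at h
      · exact h
    obtain ⟨m₁, hm1⟩ := h3m
    have h3B1 : ¬ (3:ℤ) ∣ (n ^ 2 + 3 * m₁ ^ 2) := by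
      intro hd
      have h3n2 : (3:ℤ) ∣ n ^ 2 := by
        have hidnn : n ^ 2 = (n ^ 2 + 3 * m₁ ^ 2) - 3 * m₁ ^ 2 := by ring
        rw [hidnn]
        exact dvd_sub hd ⟨m₁ ^ 2, by ring⟩
      have h3n : (3:ℤ) ∣ n := Int.prime_three.dvd_of_dvd_pow h3n2
      have := hcopmn.isUnit_of_dvd' ⟨m₁, hm1⟩ h3n
      rcases Int.isUnit_iff.mp this with h | h <;> norm_num at h
    have hB3 : m ^ 2 + 3 * n ^ 2 = 3 * (n ^ 2 + 3 * m₁ ^ 2) := by rw [hm1]; ring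
    have hB1odd : Odd (n ^ 2 + 3 * m₁ ^ 2) := by
      rw [hB3] at hBodd
      exact (Int.odd_mul.mp hBodd).2
    have hB10 : (n ^ 2 + 3 * m₁ ^ 2) ≠ 0 := by
      intro h0; rw [h0] at hB1odd; simp at hB1odd
    obtain ⟨z₁, hz1⟩ := h3
    have h6 : m₁ * (n ^ 2 + 3 * m₁ ^ 2) = 6 * z₁ ^ 3 := by
      have h := hAB
      rw [hm1, hz1] at h
      have h18 : 18 * (m₁ * (n ^ 2 + 3 * m₁ ^ 2)) = 18 * (6 * z₁ ^ 3) := by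
        linear_combination h
      exact mul_left_cancel₀ (by norm_num) h18
    have hc2B1 : IsCoprime (2:ℤ) (n ^ 2 + 3 * m₁ ^ 2) := by
      rw [Int.prime_two.coprime_iff_not_dvd]
      obtain ⟨j, hj⟩ := hB1odd
      rintro ⟨c, hc⟩
      omega
    have h2m1 : (2:ℤ) ∣ m₁ := by
      refine hc2B1.dvd_of_dvd_mul_right ⟨3 * z₁ ^ 3, ?_⟩
      linear_combination h6
    obtain ⟨m₂, hm2'⟩ := h2m1
    have h3'eq : m₂ * (n ^ 2 + 3 * m₁ ^ 2) = 3 * z₁ ^ 3 := by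
      have h := h6
      rw [hm2'] at h
      have h2 : 2 * (m₂ * (n ^ 2 + 3 * m₁ ^ 2)) = 2 * (3 * z₁ ^ 3) := by
        linear_combination h + 6 * m₂ * (m₁ + 2 * m₂) * hm2'
      exact mul_left_cancel₀ (by norm_num) h2
    have hc3B1 : IsCoprime (3:ℤ) (n ^ 2 + 3 * m₁ ^ 2) := by
      rw [Int.prime_three.coprime_iff_not_dvd]
      exact h3B1
    have h3m2 : (3:ℤ) ∣ m₂ := by
      refine hc3B1.dvd_of_dvd_mul_right ⟨z₁ ^ 3, ?_⟩
      linear_combination h3'eq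
    obtain ⟨m₃, hm3'⟩ := h3m2
    have hfin : (n ^ 2 + 3 * m₁ ^ 2) * m₃ = z₁ ^ 3 := by
      have h := h3'eq
      rw [hm3'] at h
      have h2 : 3 * ((n ^ 2 + 3 * m₁ ^ 2) * m₃) = 3 * (z₁ ^ 3) := by linear_combination h
      exact mul_left_cancel₀ (by norm_num) h2
    have hcopnm1 : IsCoprime n m₁ := by
      by_contra hc
      have hnz : ¬ (n = 0 ∧ m₁ = 0) := by
        rintro ⟨rfl, rfl⟩; norm_num at hB1odd
      obtain ⟨t, ht, htn, htm1⟩ := exists_prime_common_divisor hc hnz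
      have htm : t ∣ m := hm1 ▸ htm1.mul_left 3
      exact ht.not_unit (hcopmn.isUnit_of_dvd' htm htn)
    have hcopB1m3 : IsCoprime (n ^ 2 + 3 * m₁ ^ 2) m₃ := by
      by_contra hc
      obtain ⟨t, ht, htB, htm3⟩ :=
        exists_prime_common_divisor hc (by rintro ⟨h0, -⟩; exact hB10 h0)
      have htm1 : t ∣ m₁ := by
        rw [hm2', hm3']
        exact dvd_mul_of_dvd_right (dvd_mul_of_dvd_right htm3 3) 2
      have htn2 : t ∣ n ^ 2 := by
        have hidn : n ^ 2 = (n ^ 2 + 3 * m₁ ^ 2) - 3 * m₁ ^ 2 := by ring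
        rw [hidn]
        exact dvd_sub htB ((dvd_pow htm1 two_ne_zero).mul_left 3)
      have htn : t ∣ n := ht.dvd_of_dvd_pow htn2
      exact ht.not_unit (hcopnm1.isUnit_of_dvd' htn htm1)
    obtain ⟨u, hu⟩ := Int.eq_pow_of_mul_eq_pow_odd_left hcopB1m3 (⟨1, by norm_num⟩ : Odd 3) hfin
    obtain ⟨v, hv⟩ := Int.eq_pow_of_mul_eq_pow_odd_right hcopB1m3 (⟨1, by norm_num⟩ : Odd 3) hfin
    have hz1uv : z₁ = u * v := by
      apply cube_eq_cube
      rw [mul_pow, ← hu, ← hv]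
      exact hfin.symm
    have hu0 : u ≠ 0 := fun h0 => hB10 (by rw [hu, h0]; ring)
    have hv0 : v ≠ 0 := by
      intro h0
      apply hz
      rw [hz1, hz1uv, h0, mul_zero, mul_zero]
    have huodd : Odd u := by
      rcases Int.even_or_odd u with ⟨c, hc⟩ | ho
      · exfalso
        have hEB : Even (n ^ 2 + 3 * m₁ ^ 2) := ⟨4 * c ^ 3, by rw [hu, hc]; ring⟩
        exact (Int.not_odd_iff_even.mpr hEB) hB1odd
      · exact ho
    have hu3 : ¬ (3:ℤ) ∣ u := fun hd => h3B1 (hu ▸ dvd_pow hd (by norm_num))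
    -- apply the Eisenstein parametrization with a := n, b := m₁
    have hoddnm1 : Odd (n + m₁) := by
      have hmeven : Even m := ⟨3 * m₂, by rw [hm1, hm2']; ring⟩
      obtain ⟨c, hc⟩ := hmeven
      obtain ⟨j, hj⟩ := hoddmn
      refine ⟨j - c + 3 * m₃, by rw [hm2', hm3']; omega⟩
    obtain ⟨p, q, hpq1, hpq2⟩ := eis_cube_param hcopnm1 hoddnm1 huodd hu3 hu
    have hm16 : m₁ = 6 * v ^ 3 := by rw [hm2', hm3', hv]; ring
    have hprodDEF : q * (p - q) * (q + (p - q)) = 4 * v ^ 3 := by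
      have h3g : 3 * (q * (p - q) * (q + (p - q))) = 3 * (4 * v ^ 3) := by
        linear_combination - hpq2 + 2 * hm16
      exact mul_left_cancel₀ (by norm_num) h3g
    have hcoppq : IsCoprime p q := by
      by_contra hc
      have hnz : ¬ (p = 0 ∧ q = 0) := by
        rintro ⟨rfl, rfl⟩
        norm_num at hpq1
        rw [hpq1] at hoddnm1
        simp at hoddnm1
      obtain ⟨t, ht, htp, htq⟩ := exists_prime_common_divisor hc hnz
      have ht1 : t ∣ n + m₁ := by
        rw [hpq1]
        exact dvd_sub (dvd_add (dvd_pow htp (by norm_num)) (dvd_pow htq (by norm_num)))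
          ((htp.mul_left 3).mul_right (q ^ 2))
      have ht2 : t ∣ 2 * m₁ := by
        rw [hpq2]
        exact dvd_sub (htq.mul_left (3 * p ^ 2)) ((htp.mul_left 3).mul_right (q ^ 2))
      have htm1 : t ∣ m₁ := by
        rcases ht.dvd_mul.mp ht2 with h2 | h
        · exfalso
          have h2nm : (2:ℤ) ∣ n + m₁ := (ht.associated_of_dvd Int.prime_two h2).symm.dvd.trans ht1
          obtain ⟨c, hc⟩ := h2nm
          obtain ⟨j, hj⟩ := hoddnm1
          omega
        · exact h
      have htn : t ∣ n := by
        have hidn : n = (n + m₁) - m₁ := by ring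
        rw [hidn]
        exact dvd_sub ht1 htm1
      exact ht.not_unit (hcopnm1.isUnit_of_dvd' htn htm1)
    have hcopqE : IsCoprime q (p - q) := by
      have h := hcoppq.symm.add_mul_left_right (-1)
      rwa [show p + q * -1 = p - q by ring] at h
    obtain ⟨d, e, w, hde, hd0, he0, hw0, hlt⟩ := descent_core hcopqE hprodDEF hv0
    refine ⟨d, e, w, hde, hd0, he0, hw0, ?_⟩
    have hzabs : z.natAbs = 3 * (u.natAbs * v.natAbs) := by
      rw [hz1, hz1uv, Int.natAbs_mul, Int.natAbs_mul]
      rfl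
    have hu1 : 1 ≤ u.natAbs := Int.natAbs_pos.mpr hu0
    calc w.natAbs < v.natAbs := hlt
      _ ≤ u.natAbs * v.natAbs := Nat.le_mul_of_pos_left _ (by omega)
      _ ≤ 3 * (u.natAbs * v.natAbs) := Nat.le_mul_of_pos_left _ (by omega)
      _ = z.natAbs := hzabs.symm
  · -- CASE A : ¬ 3 ∣ z
    have h3B : ¬ (3:ℤ) ∣ (m ^ 2 + 3 * n ^ 2) := by
      intro hd
      have h3m : (3:ℤ) ∣ m := by
        have h3m2 : (3:ℤ) ∣ m ^ 2 := by
          have hidm : m ^ 2 = (m ^ 2 + 3 * n ^ 2) - 3 * n ^ 2 := by ring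
          rw [hidm]; exact dvd_sub hd ⟨n ^ 2, by ring⟩
        exact Int.prime_three.dvd_of_dvd_pow h3m2
      have h3z3 : (3:ℤ) ∣ 4 * z ^ 3 := by
        rw [← hAB]
        exact dvd_mul_of_dvd_left (h3m.mul_left 2) _
      rcases Int.prime_three.dvd_mul.mp h3z3 with h | h
      · norm_num at h
      · exact h3 (Int.prime_three.dvd_of_dvd_pow h)
    have hc2B : IsCoprime (2:ℤ) (m ^ 2 + 3 * n ^ 2) := by
      rw [Int.prime_two.coprime_iff_not_dvd]
      obtain ⟨j, hj⟩ := hBodd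
      rintro ⟨c, hc⟩
      omega
    have hc4B : IsCoprime (4:ℤ) (m ^ 2 + 3 * n ^ 2) := by
      have h : IsCoprime ((2:ℤ) ^ 2) (m ^ 2 + 3 * n ^ 2) := IsCoprime.pow_left hc2B
      norm_num at h
      exact h
    have h4m : (4:ℤ) ∣ 2 * m := hc4B.dvd_of_dvd_mul_right ⟨z ^ 3, hAB⟩
    obtain ⟨m₂, hm2⟩ : ∃ m₂, m = 2 * m₂ := by
      obtain ⟨c, hc⟩ := h4m
      exact ⟨c, by omega⟩
    have hsplit : (m ^ 2 + 3 * n ^ 2) * m₂ = z ^ 3 := by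
      have h := hAB
      rw [hm2] at h
      have h4 : 4 * ((m ^ 2 + 3 * n ^ 2) * m₂) = 4 * z ^ 3 := by
        linear_combination h + 4 * m₂ * (m + 2 * m₂) * hm2
      exact mul_left_cancel₀ (by norm_num) h4
    have hcopBm : IsCoprime (m ^ 2 + 3 * n ^ 2) m := by
      by_contra hc
      obtain ⟨t, ht, htB, htm⟩ :=
        exists_prime_common_divisor hc (by rintro ⟨h0, -⟩; exact hB0 h0)
      have ht3n2 : t ∣ 3 * n ^ 2 := by
        have hidB : 3 * n ^ 2 = (m ^ 2 + 3 * n ^ 2) - m * m := by ring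
        rw [hidB]
        exact dvd_sub htB (htm.mul_right m)
      rcases ht.dvd_mul.mp ht3n2 with h3t | hn2
      · exact h3B (three_dvd_of_prime_dvd_three ht h3t htB)
      · have htn : t ∣ n := ht.dvd_of_dvd_pow hn2
        exact ht.not_unit (hcopmn.isUnit_of_dvd' htm htn)
    have hcopBm2 : IsCoprime (m ^ 2 + 3 * n ^ 2) m₂ :=
      hcopBm.of_isCoprime_of_dvd_right ⟨2, by rw [hm2]; ring⟩
    obtain ⟨u, hu⟩ := Int.eq_pow_of_mul_eq_pow_odd_left hcopBm2 (⟨1, by norm_num⟩ : Odd 3) hsplit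
    obtain ⟨v, hv⟩ := Int.eq_pow_of_mul_eq_pow_odd_right hcopBm2 (⟨1, by norm_num⟩ : Odd 3) hsplit
    have hzuv : z = u * v := by
      apply cube_eq_cube
      rw [mul_pow, ← hu, ← hv]
      exact hsplit.symm
    have hu0 : u ≠ 0 := fun h0 => hB0 (by rw [hu, h0]; ring)
    have hv0 : v ≠ 0 := by
      intro h0
      exact hz (by rw [hzuv, h0, mul_zero])
    have huodd : Odd u := by
      rcases Int.even_or_odd u with ⟨c, hc⟩ | ho
      · exfalso
        have hEB : Even (m ^ 2 + 3 * n ^ 2) := ⟨4 * c ^ 3, by rw [hu, hc]; ring⟩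
        exact (Int.not_odd_iff_even.mpr hEB) hBodd
      · exact ho
    have hu3 : ¬ (3:ℤ) ∣ u := fun hd => h3B (hu ▸ dvd_pow hd (by norm_num))
    obtain ⟨p, q, hpq1, hpq2⟩ := eis_cube_param hcopmn hoddmn huodd hu3 hu
    have hxy4 : 2 * m = 4 * v ^ 3 := by rw [hm2, hv]; ring
    have hprodDEF : (2 * p - q) * (2 * q - p) * ((2 * p - q) + (2 * q - p)) = 4 * (-v) ^ 3 := by
      linear_combination 2 * hpq1 - hpq2 - hxy4
    have hcoppq : IsCoprime p q := by
      by_contra hc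
      have hnz : ¬ (p = 0 ∧ q = 0) := by
        rintro ⟨rfl, rfl⟩
        norm_num at hpq1
        rw [hpq1] at hoddmn
        simp at hoddmn
      obtain ⟨t, ht, htp, htq⟩ := exists_prime_common_divisor hc hnz
      have ht1 : t ∣ m + n := by
        rw [hpq1]
        exact dvd_sub (dvd_add (dvd_pow htp (by norm_num)) (dvd_pow htq (by norm_num)))
          ((htp.mul_left 3).mul_right (q ^ 2))
      have ht2 : t ∣ 2 * n := by
        rw [hpq2]
        exact dvd_sub (htq.mul_left (3 * p ^ 2)) ((htp.mul_left 3).mul_right (q ^ 2))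
      have htn : t ∣ n := by
        rcases ht.dvd_mul.mp ht2 with h2 | h
        · exfalso
          have h2nm : (2:ℤ) ∣ m + n := (ht.associated_of_dvd Int.prime_two h2).symm.dvd.trans ht1
          obtain ⟨c, hc⟩ := h2nm
          obtain ⟨j, hj⟩ := hoddmn
          omega
        · exact h
      have htm : t ∣ m := by
        have hidm : m = (m + n) - n := by ring
        rw [hidm]
        exact dvd_sub ht1 htn
      exact ht.not_unit (hcopmn.isUnit_of_dvd' htm htn)
    have hcopDE : IsCoprime (2 * p - q) (2 * q - p) := by
      by_contra hc
      have hnz : ¬ (2 * p - q = 0 ∧ 2 * q - p = 0) := by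
        rintro ⟨h1, h2⟩
        have hp0 : p = 0 := by omega
        have hq0 : q = 0 := by omega
        rw [hp0, hq0] at hpq1
        norm_num at hpq1
        rw [hpq1] at hoddmn
        simp at hoddmn
      obtain ⟨t, ht, htD, htE⟩ := exists_prime_common_divisor hc hnz
      have ht3p : t ∣ 3 * p := by
        have hid3 : 3 * p = 2 * (2 * p - q) + (2 * q - p) := by ring
        rw [hid3]
        exact dvd_add (htD.mul_left 2) htE
      have ht3q : t ∣ 3 * q := by
        have hid3 : 3 * q = (2 * p - q) + 2 * (2 * q - p) := by ring
        rw [hid3]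
        exact dvd_add htD (htE.mul_left 2)
      have h3case : t ∣ 3 → False := by
        intro h3t
        have h3D : (3:ℤ) ∣ (2 * p - q) := three_dvd_of_prime_dvd_three ht h3t htD
        have h3prod : (3:ℤ) ∣ 4 * (-v) ^ 3 := by
          rw [← hprodDEF]
          exact dvd_mul_of_dvd_left (dvd_mul_of_dvd_left h3D _) _
        rcases Int.prime_three.dvd_mul.mp h3prod with h | h
        · norm_num at h
        · have h3v : (3:ℤ) ∣ v := by
            have := Int.prime_three.dvd_of_dvd_pow h
            omega
          exact h3 (by rw [hzuv]; exact h3v.mul_left u)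
      rcases ht.dvd_mul.mp ht3p with h3t | hp
      · exact h3case h3t
      · rcases ht.dvd_mul.mp ht3q with h3t | hq
        · exact h3case h3t
        · exact ht.not_unit (hcoppq.isUnit_of_dvd' hp hq)
    obtain ⟨d, e, w, hde, hd0, he0, hw0, hlt⟩ :=
      descent_core hcopDE hprodDEF (neg_ne_zero.mpr hv0)
    refine ⟨d, e, w, hde, hd0, he0, hw0, ?_⟩
    rw [Int.natAbs_neg] at hlt
    have hzabs : z.natAbs = u.natAbs * v.natAbs := by rw [hzuv, Int.natAbs_mul]
    have hu1 : 1 ≤ u.natAbs := Int.natAbs_pos.mpr hu0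
    calc w.natAbs < v.natAbs := hlt
      _ ≤ u.natAbs * v.natAbs := Nat.le_mul_of_pos_left _ (by omega)
      _ = z.natAbs := hzabs.symm
theorem to_coprime : ∀ M : ℕ, ∀ x y z : ℤ, x.natAbs ≤ M → x ≠ 0 → y ≠ 0 → z ≠ 0 →
    x ^ 3 + y ^ 3 = 4 * z ^ 3 →
    ∃ x' y' z' : ℤ, x' ≠ 0 ∧ y' ≠ 0 ∧ z' ≠ 0 ∧ IsCoprime x' y' ∧
      x' ^ 3 + y' ^ 3 = 4 * z' ^ 3 ∧ z'.natAbs ≤ z.natAbs := by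
  intro M
  induction M using Nat.strong_induction_on with
  | _ M ih =>
    intro x y z hM hx hy hz heq
    by_cases hcop : IsCoprime x y
    · exact ⟨x, y, z, hx, hy, hz, hcop, heq, le_refl _⟩
    · obtain ⟨t, ht, htx, hty⟩ :=
        exists_prime_common_divisor hcop (by rintro ⟨h0, -⟩; exact hx h0)
      have ht2 : 2 ≤ t.natAbs := Nat.Prime.two_le (Int.prime_iff_natAbs_prime.mp ht)
      rcases Int.even_or_odd t with hte | hto
      · -- t is even, so 2 ∣ x and 2 ∣ y
        have h2t : (2:ℤ) ∣ t := by obtain ⟨c, hc⟩ := hte; exact ⟨c, by omega⟩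
        obtain ⟨X, hX⟩ := h2t.trans htx
        obtain ⟨Y, hY⟩ := h2t.trans hty
        have heq2 : 2 * (X ^ 3 + Y ^ 3) = z ^ 3 := by
          rw [hX, hY] at heq
          have h4 : 4 * (2 * (X ^ 3 + Y ^ 3)) = 4 * z ^ 3 := by linear_combination heq
          exact mul_left_cancel₀ (by norm_num) h4
        have hze : Even z := by
          have hz3 : Even (z ^ 3) := ⟨X ^ 3 + Y ^ 3, by linarith⟩
          exact (Int.even_pow.mp hz3).1
        obtain ⟨Z, hZ⟩ := hze
        have heq3 : X ^ 3 + Y ^ 3 = 4 * Z ^ 3 := by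
          rw [hZ] at heq2
          have h2 : 2 * (X ^ 3 + Y ^ 3) = 2 * (4 * Z ^ 3) := by linear_combination heq2
          exact mul_left_cancel₀ (by norm_num) h2
        have hX0 : X ≠ 0 := fun h0 => hx (by rw [hX, h0, mul_zero])
        have hY0 : Y ≠ 0 := fun h0 => hy (by rw [hY, h0, mul_zero])
        have hZ0 : Z ≠ 0 := fun h0 => hz (by rw [hZ, h0]; ring)
        have hXlt : X.natAbs < M := by
          have h1 : x.natAbs = 2 * X.natAbs := by
            rw [hX, Int.natAbs_mul]; rfl
          have h2 : 1 ≤ X.natAbs := Int.natAbs_pos.mpr hX0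
          omega
        obtain ⟨x', y', z', h1, h2, h3, h4, h5, h6⟩ :=
          ih X.natAbs hXlt X Y Z (le_refl _) hX0 hY0 hZ0 heq3
        refine ⟨x', y', z', h1, h2, h3, h4, h5, ?_⟩
        have : z.natAbs = 2 * Z.natAbs := by
          rw [hZ]
          rw [show Z + Z = 2 * Z by ring, Int.natAbs_mul]
          rfl
        omega
      · -- t is odd
        obtain ⟨X, hX⟩ := htx
        obtain ⟨Y, hY⟩ := hty
        have ht3dvd : t ^ 3 ∣ 4 * z ^ 3 := by
          rw [← heq, hX, hY]
          exact dvd_add ⟨X ^ 3, by ring⟩ ⟨Y ^ 3, by ring⟩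
        have hc2t : IsCoprime (2:ℤ) t := by
          rw [Int.prime_two.coprime_iff_not_dvd]
          obtain ⟨c, hc⟩ := hto
          rintro ⟨j, hj⟩
          omega
        have hct4 : IsCoprime (t ^ 3) (4:ℤ) := by
          have h : IsCoprime ((t:ℤ) ^ 3) ((2:ℤ) ^ 2) := IsCoprime.pow hc2t.symm
          norm_num at h
          exact h
        have htz3 : t ^ 3 ∣ z ^ 3 := hct4.dvd_of_dvd_mul_left ht3dvd
        have htz : t ∣ z := (Int.pow_dvd_pow_iff (by norm_num)).mp htz3
        obtain ⟨Z, hZ⟩ := htz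
        have ht0 : t ≠ 0 := ht.ne_zero
        have heq3 : X ^ 3 + Y ^ 3 = 4 * Z ^ 3 := by
          rw [hX, hY, hZ] at heq
          have h := heq
          have ht3 : (t:ℤ) ^ 3 ≠ 0 := pow_ne_zero _ ht0
          apply mul_left_cancel₀ ht3
          linear_combination h
        have hX0 : X ≠ 0 := fun h0 => hx (by rw [hX, h0, mul_zero])
        have hY0 : Y ≠ 0 := fun h0 => hy (by rw [hY, h0, mul_zero])
        have hZ0 : Z ≠ 0 := fun h0 => hz (by rw [hZ, h0, mul_zero])
        have hXlt : X.natAbs < M := by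
          have h1 : x.natAbs = t.natAbs * X.natAbs := by
            rw [hX, Int.natAbs_mul]
          have h2 : 1 ≤ X.natAbs := Int.natAbs_pos.mpr hX0
          nlinarith [hM, ht2]
        obtain ⟨x', y', z', h1, h2, h3, h4, h5, h6⟩ :=
          ih X.natAbs hXlt X Y Z (le_refl _) hX0 hY0 hZ0 heq3
        refine ⟨x', y', z', h1, h2, h3, h4, h5, ?_⟩
        have hzabs : z.natAbs = t.natAbs * Z.natAbs := by
          rw [hZ, Int.natAbs_mul]
        have h7 : 1 ≤ Z.natAbs := Int.natAbs_pos.mpr hZ0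
        nlinarith [h6, ht2]

theorem no_solution : ∀ N : ℕ, ∀ x y z : ℤ, z.natAbs ≤ N → x ≠ 0 → y ≠ 0 → z ≠ 0 →
    x ^ 3 + y ^ 3 = 4 * z ^ 3 → False := by
  intro N
  induction N using Nat.strong_induction_on with
  | _ N ih =>
    intro x y z hN hx hy hz heq
    obtain ⟨x', y', z', h1, h2, h3, h4, h5, h6⟩ :=
      to_coprime x.natAbs x y z (le_refl _) hx hy hz heq
    obtain ⟨d, e, w, hde, hd0, he0, hw0, hlt⟩ := descent_step h1 h2 h3 h4 h5
    exact ih w.natAbs (by omega) d e w (le_refl _) hd0 he0 hw0 hde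

theorem stmt_8 :
    ¬ ∃ a b c : ℤ, a ≠ 0 ∧ b ≠ 0 ∧ c ≠ 0 ∧ a ^ 3 + 4 * b ^ 3 + c ^ 3 = 0 := by
  rintro ⟨a, b, c, ha, hb, hc, heq⟩
  have h : a ^ 3 + c ^ 3 = 4 * (-b) ^ 3 := by linear_combination heq
  exact no_solution (-b).natAbs a c (-b) (le_refl _) ha hc (neg_ne_zero.mpr hb) h
end

section
/- Let p ≥ 17 be a prime and a, b, c pairwise coprime odd nonzero integers with a^p + 2b^p + c^p = 0. If every odd prime dividing abc is equal to 3, then two of |a|, |b|, |c| equal 1 and the third is a power of 3; moreover, this forces a = -b = c = ±1. -/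
/-!
By the hypothesis on prime divisors and oddness, each of `|a|`, `|b|`, `|c|` is a power of `3`,
and pairwise coprimality leaves at most one of them different from `1`. The remaining one is
then `1` as well, since its `p`-th power is bounded by `3` through the equation while `p ≥ 2`.
Finally, with `a, b, c ∈ {±1}` the equation forces `a = c = -b`.
-/

theorem Int.exists_abs_eq_pow_of_odd {x : ℤ} {r : ℕ} (hx : Odd x)
    (hr : ∀ q : ℕ, q.Prime → Odd q → (q : ℤ) ∣ x → q = r) : ∃ k : ℕ, |x| = (r : ℤ) ^ k := by
  have hx0 : x.natAbs ≠ 0 := by rintro h; simp [Int.natAbs_eq_zero.mp h] at hx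
  refine ⟨x.natAbs.primeFactorsList.length, ?_⟩
  rw [abs_eq_natAbs]
  exact_mod_cast Nat.eq_prime_pow_of_unique_prime_dvd hx0 fun {q} hq hqx => by
    have hqx : (q : ℤ) ∣ x := Int.natCast_dvd.mpr hqx
    rcases hq.eq_two_or_odd' with rfl | hodd
    · exact absurd (even_iff_two_dvd.mpr hqx) (Int.not_even_iff_odd.mpr hx)
    · exact hr q hq hodd hqx

theorem IsCoprime.abs_eq_one_or_abs_eq_one_of_abs_eq_pow {x y q : ℤ} {k m : ℕ}
    (h : IsCoprime x y) (hq : ¬IsUnit q) (hx : |x| = q ^ k) (hy : |y| = q ^ m) :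
    |x| = 1 ∨ |y| = 1 := by
  rcases k.eq_zero_or_pos with rfl | hk
  · exact .inl (by simpa using hx)
  rcases m.eq_zero_or_pos with rfl | hm
  · exact .inr (by simpa using hy)
  have hqx : q ∣ x := (dvd_abs q x).mp (hx ▸ dvd_pow_self q hk.ne')
  have hqy : q ∣ y := (dvd_abs q y).mp (hy ▸ dvd_pow_self q hm.ne')
  exact absurd (h.isUnit_of_dvd' hqx hqy) hq

theorem Int.abs_eq_one_of_odd_of_abs_pow_le_three {x : ℤ} {p : ℕ} (hp : 2 ≤ p) (hx : Odd x)
    (h : |x ^ p| ≤ 3) : |x| = 1 := by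
  have hx1 : 1 ≤ |x| := Int.one_le_abs (by rintro rfl; simp at hx)
  by_contra hne
  have h4 : 4 ≤ |x| ^ p :=
    calc (4 : ℤ) = 2 ^ 2 := by norm_num
      _ ≤ 2 ^ p := pow_le_pow_right₀ (by norm_num) hp
      _ ≤ |x| ^ p := pow_le_pow_left₀ (by norm_num) (by omega) p
  rw [abs_pow] at h
  omega

section Equation

variable {p : ℕ} {a b c : ℤ}

theorem abs_eq_one_of_two_abs_eq_one (hp : 2 ≤ p) (ha : Odd a) (hb : Odd b) (hc : Odd c)
    (heq : a ^ p + 2 * b ^ p + c ^ p = 0)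
    (h : |a| = 1 ∧ |b| = 1 ∨ |a| = 1 ∧ |c| = 1 ∨ |b| = 1 ∧ |c| = 1) :
    |a| = 1 ∧ |b| = 1 ∧ |c| = 1 := by
  have hpow : ∀ x : ℤ, |x| = 1 → -1 ≤ x ^ p ∧ x ^ p ≤ 1 := fun x hx =>
    abs_le.mp (by rw [abs_pow, hx, one_pow])
  have bound : ∀ x : ℤ, Odd x → |x ^ p| ≤ 3 → |x| = 1 := fun _ =>
    Int.abs_eq_one_of_odd_of_abs_pow_le_three hp
  rcases h with ⟨ha1, hb1⟩ | ⟨ha1, hc1⟩ | ⟨hb1, hc1⟩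
  · obtain ⟨⟨_, _⟩, _, _⟩ := And.intro (hpow a ha1) (hpow b hb1)
    exact ⟨ha1, hb1, bound c hc (abs_le.mpr ⟨by linarith, by linarith⟩)⟩
  · obtain ⟨⟨_, _⟩, _, _⟩ := And.intro (hpow a ha1) (hpow c hc1)
    exact ⟨ha1, bound b hb (abs_le.mpr ⟨by linarith, by linarith⟩), hc1⟩
  · obtain ⟨⟨_, _⟩, _, _⟩ := And.intro (hpow b hb1) (hpow c hc1)
    exact ⟨bound a ha (abs_le.mpr ⟨by linarith, by linarith⟩), hb1, hc1⟩

theorem eq_neg_of_abs_eq_one (ha : |a| = 1) (hb : |b| = 1) (hc : |c| = 1)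
    (heq : a ^ p + 2 * b ^ p + c ^ p = 0) : a = -b ∧ -b = c ∧ (a = 1 ∨ a = -1) := by
  rcases abs_eq (zero_le_one' ℤ) |>.mp ha with rfl | rfl <;>
    rcases abs_eq (zero_le_one' ℤ) |>.mp hb with rfl | rfl <;>
    rcases abs_eq (zero_le_one' ℤ) |>.mp hc with rfl | rfl <;>
    rcases p.even_or_odd with hp | hp <;>
    simp [hp.neg_one_pow] at heq ⊢

end Equation

theorem stmt_13_general (p : ℕ) (hp17 : 17 ≤ p) (a b c : ℤ)
    (haodd : Odd a) (hbodd : Odd b) (hcodd : Odd c)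
    (hab : IsCoprime a b) (hbc : IsCoprime b c) (hac : IsCoprime a c)
    (heq : a ^ p + 2 * b ^ p + c ^ p = 0)
    (hdiv : ∀ q : ℕ, q.Prime → Odd q → (q : ℤ) ∣ a * b * c → q = 3) :
    ((|a| = 1 ∧ |b| = 1 ∧ ∃ n : ℕ, |c| = 3 ^ n) ∨
     (|a| = 1 ∧ |c| = 1 ∧ ∃ n : ℕ, |b| = 3 ^ n) ∨
     (|b| = 1 ∧ |c| = 1 ∧ ∃ n : ℕ, |a| = 3 ^ n)) ∧
    (a = -b ∧ -b = c ∧ (a = 1 ∨ a = -1)) := by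
  have power_of_three : ∀ x : ℤ, Odd x → x ∣ a * b * c → ∃ k : ℕ, |x| = (3 : ℤ) ^ k :=
    fun x hx hxabc => Int.exists_abs_eq_pow_of_odd hx fun q hq hodd hqx =>
      hdiv q hq hodd (hqx.trans hxabc)
  obtain ⟨ka, hka⟩ := power_of_three a haodd ⟨b * c, by ring⟩
  obtain ⟨kb, hkb⟩ := power_of_three b hbodd ⟨a * c, by ring⟩
  obtain ⟨kc, hkc⟩ := power_of_three c hcodd ⟨a * b, by ring⟩
  have h3 : ¬IsUnit (3 : ℤ) := by decide
  have two_units : |a| = 1 ∧ |b| = 1 ∨ |a| = 1 ∧ |c| = 1 ∨ |b| = 1 ∧ |c| = 1 := by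
    have := hab.abs_eq_one_or_abs_eq_one_of_abs_eq_pow h3 hka hkb
    have := hbc.abs_eq_one_or_abs_eq_one_of_abs_eq_pow h3 hkb hkc
    have := hac.abs_eq_one_or_abs_eq_one_of_abs_eq_pow h3 hka hkc
    tauto
  obtain ⟨ha1, hb1, hc1⟩ :=
    abs_eq_one_of_two_abs_eq_one (by omega) haodd hbodd hcodd heq two_units
  exact ⟨.inl ⟨ha1, hb1, 0, by rw [hc1, pow_zero]⟩, eq_neg_of_abs_eq_one ha1 hb1 hc1 heq⟩

theorem stmt_13 (p : ℕ) (hp : p.Prime) (hp17 : 17 ≤ p) (a b c : ℤ)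
    (ha : a ≠ 0) (hb : b ≠ 0) (hc : c ≠ 0)
    (haodd : Odd a) (hbodd : Odd b) (hcodd : Odd c)
    (hab : IsCoprime a b) (hbc : IsCoprime b c) (hac : IsCoprime a c)
    (heq : a ^ p + 2 * b ^ p + c ^ p = 0)
    (hdiv : ∀ q : ℕ, q.Prime → Odd q → (q : ℤ) ∣ a * b * c → q = 3) :
    ((|a| = 1 ∧ |b| = 1 ∧ ∃ n : ℕ, |c| = 3 ^ n) ∨
     (|a| = 1 ∧ |c| = 1 ∧ ∃ n : ℕ, |b| = 3 ^ n) ∨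
     (|b| = 1 ∧ |c| = 1 ∧ ∃ n : ℕ, |a| = 3 ^ n)) ∧
    (a = -b ∧ -b = c ∧ (a = 1 ∨ a = -1)) :=
  stmt_13_general p hp17 a b c haodd hbodd hcodd hab hbc hac heq hdiv
end
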